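/- arXiv:2112.02251 — 6 statements merged into one kernel-verified Lean document; each statement's English description precedes it below -/
import Mathlib

section
/- The number of classical parking functions of length n (sequences (π₁,...,πₙ) of positive integers whose non-decreasing rearrangement λ satisfies λᵢ ≤ i for all i) is (n+1)^(n-1). -/
/-- A `u`-parking function: a sequence of positive integers whose non-decreasing
rearrangement `λ = π ∘ σ` satisfies `λ i ≤ u i` for all `i`. -/
def IsParkingFn {m : ℕ} (u : Fin m → ℕ) (π : Fin m → ℕ) : Prop :=
  (∀ i, 0 < π i) ∧ ∃ σ : Equiv.Perm (Fin m),
    Monotone (fun i => π (σ i)) ∧ ∀ i, π (σ i) ≤ u i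

open Finset

lemma park_iff {n : ℕ} (π : Fin n → ℕ) :
    IsParkingFn (fun i : Fin n => i.val + 1) π ↔
      (∀ i, 0 < π i) ∧ ∀ m, 1 ≤ m → m ≤ n →
        m ≤ (univ.filter (fun i => π i ≤ m)).card := by
  constructor
  · rintro ⟨hpos, σ, hmono, hle⟩
    refine ⟨hpos, fun m hm1 hmn => ?_⟩
    calc m = (univ : Finset (Fin m)).card := by simp
    _ ≤ (univ.filter (fun i => π i ≤ m)).card := by
        apply Finset.card_le_card_of_injOn (fun j : Fin m => σ (Fin.castLE hmn j))
        · intro j _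
          simp only [mem_coe, mem_filter, mem_univ, true_and]
          have h1 : Fin.castLE hmn j ≤ (⟨m - 1, by omega⟩ : Fin n) := by
            simp [Fin.le_def]; omega
          calc π (σ (Fin.castLE hmn j)) ≤ π (σ ⟨m - 1, by omega⟩) := hmono h1
            _ ≤ (m - 1) + 1 := hle ⟨m - 1, by omega⟩
            _ = m := by omega
        · intro a _ b _ hab
          have := σ.injective hab
          exact Fin.castLE_injective hmn this
  · rintro ⟨hpos, hcnt⟩
    refine ⟨hpos, Tuple.sort π, Tuple.monotone_sort π, fun i => ?_⟩
    by_contra hcon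
    push_neg at hcon
    set g : Fin n → ℕ := π ∘ Tuple.sort π with hg
    have hmono : Monotone g := Tuple.monotone_sort π
    have hgi : i.val + 2 ≤ g i := by simp only [hg, Function.comp_apply]; omega
    have hk := hcnt (i.val + 1) (by omega) (by omega)
    have hle : (univ.filter (fun l => π l ≤ i.val + 1)).card ≤ i.val := by
      calc (univ.filter (fun l => π l ≤ i.val + 1)).card
          ≤ (Finset.Iio i).card := by
            apply Finset.card_le_card_of_injOn (fun l => (Tuple.sort π)⁻¹ l)
            · intro l hl
              simp only [mem_coe, mem_filter, mem_univ, true_and] at hl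
              simp only [mem_coe, Finset.mem_Iio]
              by_contra hge
              push_neg at hge
              have h1 : g i ≤ g ((Tuple.sort π)⁻¹ l) := hmono hge
              have h2 : g ((Tuple.sort π)⁻¹ l) = π l := by simp [hg]
              omega
            · intro a _ b _ hab
              exact (Tuple.sort π)⁻¹.injective hab
        _ = i.val := Fin.card_Iio i
    omega


/-- The cycle lemma: if `S` decreases by 1 over every window of length `N`,
there is a unique starting point `d < N` from which all partial sums stay ≥. -/
lemma cycle_lemma (N : ℕ) (hN : 0 < N) (S : ℕ → ℤ)
    (hS : ∀ m, S (m + N) = S m - 1) :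
    ∃! d : ℕ, d < N ∧ ∀ m, 1 ≤ m → m < N → S d ≤ S (d + m) := by
  -- existence of a first minimizer
  obtain ⟨d, hdN, hdmin⟩ : ∃ d, d < N ∧ ∀ j < N, S d ≤ S j := by
    obtain ⟨d, hd, hmin⟩ := Finset.exists_min_image (Finset.range N) S
      (by simp [Finset.nonempty_range_iff]; omega)
    exact ⟨d, Finset.mem_range.mp hd, fun j hj => hmin j (Finset.mem_range.mpr hj)⟩
  -- take the least such d
  have hex : ∃ d, d < N ∧ ∀ j < N, S d ≤ S j := ⟨d, hdN, hdmin⟩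
  classical
  set d₀ := Nat.find hex with hd₀
  obtain ⟨hd₀N, hd₀min⟩ := Nat.find_spec hex
  have hstrict : ∀ j < d₀, S d₀ < S j := by
    intro j hj
    have hjN : j < N := lt_trans hj hd₀N
    have h1 : S d₀ ≤ S j := hd₀min j hjN
    rcases lt_or_eq_of_le h1 with h | h
    · exact h
    · exfalso
      have : ∀ k < N, S j ≤ S k := fun k hk => h ▸ hd₀min k hk
      have : Nat.find hex ≤ j := Nat.find_le ⟨hjN, this⟩
      omega
  refine ⟨d₀, ⟨hd₀N, fun m hm1 hmN => ?_⟩, ?_⟩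
  · by_cases h : d₀ + m < N
    · exact hd₀min _ h
    · have h2 : d₀ + m - N < d₀ := by omega
      have h3 : S (d₀ + m) = S (d₀ + m - N) - 1 := by
        have := hS (d₀ + m - N); rw [show d₀ + m - N + N = d₀ + m by omega] at this
        exact this
      have := hstrict _ h2
      omega
  · rintro d' ⟨hd'N, hd'cond⟩
    by_contra hne
    rcases Nat.lt_or_ge d' d₀ with h | h
    · -- d' < d₀
      have h1 : S d' ≤ S (d' + (d₀ - d')) := hd'cond _ (by omega) (by omega)
      rw [show d' + (d₀ - d') = d₀ by omega] at h1
      have h2 := hstrict d' h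
      omega
    · have hlt : d₀ < d' := by omega
      have h1 : S d₀ ≤ S (d₀ + (d' - d₀)) := hd₀min _ (by omega)
      rw [show d₀ + (d' - d₀) = d' by omega] at h1
      have h2 : S d' ≤ S (d' + (d₀ + N - d')) := hd'cond _ (by omega) (by omega)
      rw [show d' + (d₀ + N - d') = d₀ + N by omega, hS d₀] at h2
      omega


variable {n : ℕ}

def Park (f : Fin n → ZMod (n + 1)) : Prop :=
  ∀ m, 1 ≤ m → m ≤ n → m ≤ (univ.filter (fun i => (f i).val < m)).card

lemma exists_unique_shift (g : Fin n → ZMod (n + 1)) :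
    ∃! c : ZMod (n + 1), Park (fun i => g i + c) := by
  classical
  set A : ℕ → ℕ := fun t => (univ.filter (fun i => g i = (t : ZMod (n + 1)))).card with hA
  have hAper : ∀ t, A (t + (n + 1)) = A t := by
    intro t
    have : ((t + (n + 1) : ℕ) : ZMod (n + 1)) = (t : ZMod (n + 1)) := by push_cast; simp
    simp [hA, this]
  have hsum : ∑ t ∈ range (n + 1), A t = n := by
    have h1 : (univ : Finset (Fin n)).card =
        ∑ j ∈ (univ : Finset (ZMod (n + 1))), (univ.filter (fun i => g i = j)).card :=
      Finset.card_eq_sum_card_fiberwise (fun i _ => mem_univ (g i))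
    have h2 : ∑ t ∈ range (n + 1), A t =
        ∑ j ∈ (univ : Finset (ZMod (n + 1))), (univ.filter (fun i => g i = j)).card := by
      exact Finset.sum_nbij' (fun t => (t : ZMod (n + 1))) (fun j => j.val)
        (fun t _ => mem_univ _)
        (fun j _ => mem_range.mpr (ZMod.val_lt j))
        (fun t ht => ZMod.val_cast_of_lt (mem_range.mp ht))
        (fun j _ => ZMod.natCast_zmod_val j)
        (fun t _ => rfl)
    rw [h2, ← h1, Finset.card_univ, Fintype.card_fin]
  set S : ℕ → ℤ := fun m => ∑ t ∈ range m, ((A t : ℤ) - 1) with hSdef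
  have hS : ∀ m, S (m + (n + 1)) = S m - 1 := by
    intro m
    induction m with
    | zero =>
      simp only [hSdef, zero_add, range_zero, Finset.sum_empty, Finset.sum_sub_distrib]
      rw [← Nat.cast_sum, hsum]
      simp
    | succ k ih =>
      have e1 : S (k + 1 + (n + 1)) = S (k + (n + 1)) + ((A (k + (n + 1)) : ℤ) - 1) := by
        simp only [hSdef, show k + 1 + (n + 1) = (k + (n + 1)) + 1 by omega, Finset.sum_range_succ]
      have e2 : S (k + 1) = S k + ((A k : ℤ) - 1) := by
        simp only [hSdef, Finset.sum_range_succ]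
      rw [e1, e2, ih, hAper]
      ring
  -- counting identity
  have hcount : ∀ (c : ZMod (n + 1)) (m : ℕ), m ≤ n + 1 →
      ((univ.filter (fun i => (g i + c).val < m)).card : ℤ) =
        S ((-c).val + m) - S ((-c).val) + m := by
    intro c m hm
    set d := (-c).val with hd
    have hdc : ((d : ℕ) : ZMod (n + 1)) = -c := ZMod.natCast_zmod_val (-c)
    have key : (univ.filter (fun i => (g i + c).val < m)).card
        = ∑ t ∈ range m, A (t + d) := by
      rw [Finset.card_eq_sum_card_fiberwise
        (f := fun i => (g i + c).val) (t := range m)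
        (fun i hi => mem_range.mpr (by simpa using (mem_filter.mp hi).2))]
      apply Finset.sum_congr rfl
      intro t ht
      have htm : t < n + 1 := lt_of_lt_of_le (mem_range.mp ht) hm
      congr 1
      ext i
      simp only [mem_filter, mem_univ, true_and]
      constructor
      · rintro ⟨h1, h2⟩
        have : g i + c = (t : ZMod (n + 1)) := by
          rw [← h2]
          exact (ZMod.natCast_zmod_val _).symm
        rw [show ((t + d : ℕ) : ZMod (n + 1)) = (t : ZMod (n+1)) + (d : ZMod (n+1)) by push_cast; ring,
          hdc]
        linear_combination this
      · intro h
        have : g i + c = (t : ZMod (n + 1)) := by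
          rw [show ((t + d : ℕ) : ZMod (n + 1)) = (t : ZMod (n+1)) + (d : ZMod (n+1)) by push_cast; ring,
            hdc] at h
          linear_combination h
        constructor
        · rw [this, ZMod.val_cast_of_lt htm]; exact mem_range.mp ht
        · rw [this, ZMod.val_cast_of_lt htm]
    rw [key]
    have : S (d + m) - S d = ∑ t ∈ range m, ((A (t + d) : ℤ) - 1) := by
      rw [hSdef]
      rw [show d + m = m + d by ring]
      rw [← Finset.sum_Ico_eq_sub _ (by omega : d ≤ m + d)]
      rw [Finset.sum_Ico_eq_sum_range]
      simp only [show m + d - d = m by omega]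
      apply Finset.sum_congr rfl
      intro t _
      rw [show d + t = t + d by ring]
    rw [this, Finset.sum_sub_distrib, Finset.sum_const, Finset.card_range]
    push_cast
    ring
  -- translate Park into the S condition
  have hiff : ∀ c : ZMod (n + 1), Park (fun i => g i + c) ↔
      (∀ m, 1 ≤ m → m < n + 1 → S ((-c).val) ≤ S ((-c).val + m)) := by
    intro c
    constructor
    · intro hp m hm1 hmn
      have h1 := hp m hm1 (by omega)
      have h2 := hcount c m (by omega)
      have : (m : ℤ) ≤ ((univ.filter (fun i => ((g i + c)).val < m)).card : ℤ) := by
        exact_mod_cast h1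
      omega
    · intro hp m hm1 hmn
      have h1 := hp m hm1 (by omega)
      have h2 := hcount c m (by omega)
      have : (m : ℤ) ≤ ((univ.filter (fun i => ((g i + c)).val < m)).card : ℤ) := by omega
      exact_mod_cast this
  obtain ⟨d₀, ⟨hd₀N, hd₀cond⟩, hd₀uniq⟩ := cycle_lemma (n + 1) (by omega) S hS
  refine ⟨-(d₀ : ZMod (n + 1)), (hiff _).mpr ?_, fun c hc => ?_⟩
  · have hval : ((-(-(d₀ : ZMod (n + 1)))).val) = d₀ := by
      rw [neg_neg, ZMod.val_cast_of_lt hd₀N]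
    rw [hval]
    exact hd₀cond
  · have hc' := (hiff c).mp hc
    have hvd : (-c).val = d₀ := hd₀uniq _ ⟨ZMod.val_lt _, hc'⟩
    have h2 : -c = (d₀ : ZMod (n + 1)) := by rw [← hvd, ZMod.natCast_zmod_val]
    linear_combination (-1 : ZMod (n+1)) * h2

lemma nat_card_park :
    (n + 1) * Nat.card {f : Fin n → ZMod (n + 1) // Park f} = (n + 1) ^ n := by
  classical
  choose sh hsh hshu using fun g : Fin n → ZMod (n + 1) => exists_unique_shift g
  have E : ZMod (n + 1) × {f : Fin n → ZMod (n + 1) // Park f} ≃ (Fin n → ZMod (n + 1)) :=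
    { toFun := fun p => fun i => p.2.1 i - p.1
      invFun := fun g => (sh g, ⟨fun i => g i + sh g, hsh g⟩)
      left_inv := by
        rintro ⟨c, f, hf⟩
        have hpk : Park (fun i => (fun i => f i - c) i + c) := by
          have : (fun i => (f i - c) + c) = f := by funext i; ring
          simpa [this] using hf
        have hc : c = sh (fun i => f i - c) := hshu _ _ hpk
        ext i
        · exact hc.symm
        · simp only
          rw [← hc]
          ring
      right_inv := by
        intro g
        funext i
        simp only
        ring }
  have h1 : Nat.card (ZMod (n + 1) × {f : Fin n → ZMod (n + 1) // Park f})
      = Nat.card (Fin n → ZMod (n + 1)) := Nat.card_congr E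
  rw [Nat.card_prod] at h1
  rw [Nat.card_eq_fintype_card (α := ZMod (n + 1))] at h1
  rw [Nat.card_eq_fintype_card (α := Fin n → ZMod (n + 1))] at h1
  rw [ZMod.card] at h1
  rw [Fintype.card_fun, ZMod.card, Fintype.card_fin] at h1
  exact h1


/-- The number of classical parking functions of length `n` is `(n+1)^(n-1)`. -/
theorem classical_parking_count (n : ℕ) :
    Set.ncard {π : Fin n → ℕ | IsParkingFn (fun i => i.val + 1) π} = (n + 1) ^ (n - 1) := by
  classical
  set decode : (Fin n → ZMod (n + 1)) → (Fin n → ℕ) := fun f i => (f i).val + 1 with hdec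
  have hinj : Function.Injective decode := by
    intro f g hfg
    funext i
    have : (f i).val = (g i).val := by
      have := congrFun hfg i
      simpa [hdec] using this
    calc f i = ((f i).val : ZMod (n + 1)) := (ZMod.natCast_zmod_val _).symm
      _ = ((g i).val : ZMod (n + 1)) := by rw [this]
      _ = g i := ZMod.natCast_zmod_val _
  have hseteq : {π : Fin n → ℕ | IsParkingFn (fun i => i.val + 1) π}
      = decode '' {f | Park f} := by
    ext π
    simp only [Set.mem_setOf_eq, Set.mem_image]
    rw [park_iff]
    constructor
    · rintro ⟨hpos, hcnt⟩
      have hbound : ∀ i, π i ≤ n := by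
        intro i
        rcases Nat.eq_zero_or_pos n with h | h
        · have := i.isLt; omega
        have h1 := hcnt n (by omega) le_rfl
        have h2 : (univ.filter (fun i => π i ≤ n)) = univ := by
          apply Finset.eq_univ_of_card
          have hle : (univ.filter (fun i => π i ≤ n)).card ≤ Fintype.card (Fin n) := by
            rw [← Finset.card_univ]
            exact Finset.card_filter_le _ _
          rw [Fintype.card_fin] at hle ⊢
          omega
        have := Finset.mem_filter.mp (h2 ▸ mem_univ i)
        exact this.2
      refine ⟨fun i => ((π i - 1 : ℕ) : ZMod (n + 1)), ?_, ?_⟩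
      · intro m hm1 hmn
        have hval : ∀ i, ((((π i - 1 : ℕ) : ZMod (n + 1))).val) = π i - 1 := fun i =>
          ZMod.val_cast_of_lt (by have := hbound i; omega)
        have : (univ.filter (fun i => (((π i - 1 : ℕ) : ZMod (n + 1))).val < m))
            = univ.filter (fun i => π i ≤ m) := by
          apply Finset.filter_congr
          intro i _
          rw [hval i]
          have := hpos i
          constructor <;> intro <;> simp_all <;> omega
        rw [this]
        exact hcnt m hm1 hmn
      · funext i
        simp only [hdec]
        rw [ZMod.val_cast_of_lt (by have := hbound i; omega)]
        have := hpos i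
        omega
    · rintro ⟨f, hf, hfd⟩
      subst hfd
      refine ⟨fun i => by simp [hdec], fun m hm1 hmn => ?_⟩
      have : (univ.filter (fun i => decode f i ≤ m)) = univ.filter (fun i => (f i).val < m) := by
        apply Finset.filter_congr
        intro i _
        simp only [hdec]
        constructor <;> intro <;> omega
      rw [this]
      exact hf m hm1 hmn
  rw [hseteq, Set.ncard_image_of_injective _ hinj]
  have hcard : Set.ncard {f : Fin n → ZMod (n + 1) | Park f}
      = Nat.card {f : Fin n → ZMod (n + 1) // Park f} := rfl
  rw [hcard]
  have hmul := nat_card_park (n := n)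
  rcases n with _ | k
  · simpa using hmul
  · have : (k + 2) ^ (k + 1) = (k + 2) * (k + 2) ^ k := by
      rw [pow_succ]; ring
    rw [this] at hmul
    have := Nat.eq_of_mul_eq_mul_left (by omega : 0 < k + 2) hmul
    simpa using this
end

section
/- For positive integers a, b, m, the number of (a,b)-parking functions of length m equals a·(a+mb)^(m-1). -/
open Finset

/-- coefficient `x(x+kz)^(k-1)`, with the `k = 0` case interpreted as `1`. -/
def abelC (z x k : ℕ) : ℕ := if k = 0 then 1 else x * (x + k * z) ^ (k - 1)

def Aab (z n x y : ℕ) : ℕ :=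
  ∑ k ∈ range (n + 1), n.choose k * abelC z x k * (y + (n - k) * z) ^ (n - k)

def Sab (z n x y : ℕ) : ℕ :=
  ∑ k ∈ range (n + 1), n.choose k * abelC z x k *
    (if k = n then 1 else y * (y + (n - k) * z) ^ (n - k - 1))

lemma e1_lemma (z n x y : ℕ) :
    y * Aab z n x (y+z) = (∑ i ∈ range (n+1), n.choose (i+1) * abelC z x (i+1) *
      (if i+1 = n+1 then 1 else y * (y + (n - i) * z) ^ (n - i - 1)))
      + y * (y + (n+1) * z) ^ n := by
  rw [Aab, Finset.mul_sum]
  rw [Finset.sum_range_succ'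
    (fun k => y * (n.choose k * abelC z x k * (y + z + (n - k) * z) ^ (n - k))) n]
  rw [Finset.sum_range_succ
    (fun i => n.choose (i+1) * abelC z x (i+1) *
      (if i+1 = n+1 then 1 else y * (y + (n - i) * z) ^ (n - i - 1))) n]
  have h0 : y * (↑(n.choose 0) * abelC z x 0 * (y + z + (n - 0) * z) ^ (n - 0))
      = y * (y + (n+1) * z) ^ n := by
    have hz : y + z + n * z = y + (n+1) * z := by ring
    simp [abelC, hz]
  have hn : n.choose (n+1) * abelC z x (n+1) *
      (if n+1 = n+1 then 1 else y * (y + (n - n) * z) ^ (n - n - 1)) = 0 := by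
    simp [Nat.choose_succ_self]
  rw [h0, hn, add_zero]
  congr 1
  apply Finset.sum_congr rfl
  intro i hi
  have hi' : i < n := Finset.mem_range.mp hi
  have hne : ¬ (i + 1 = n + 1) := by omega
  rw [if_neg hne]
  have h1 : n - (i+1) = n - i - 1 := by omega
  have h2 : y + z + (n - (i+1)) * z = y + (n - i) * z := by
    have h3 : n - i = (n - (i+1)) + 1 := by omega
    rw [h3]; ring
  rw [h1] at h2
  rw [h1, h2]
  ring

lemma e2_lemma (z n x y : ℕ) :
    (∑ i ∈ range (n+1), n.choose i * abelC z x (i+1) *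
      (if i+1 = n+1 then 1 else y * (y + (n - i) * z) ^ (n - i - 1)))
      = x * Aab z n y (x+z) := by
  rw [Aab, Finset.mul_sum]
  rw [← Finset.sum_range_reflect
    (fun i => n.choose i * abelC z x (i+1) *
      (if i+1 = n+1 then 1 else y * (y + (n - i) * z) ^ (n - i - 1))) (n+1)]
  apply Finset.sum_congr rfl
  intro i hi
  have hi' : i < n + 1 := Finset.mem_range.mp hi
  simp only [Nat.add_sub_cancel]
  have hc : n.choose (n - i) = n.choose i := Nat.choose_symm (by omega)
  have hC : abelC z x (n - i + 1) = x * (x + z + (n - i) * z) ^ (n - i) := by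
    rw [abelC, if_neg (by omega)]
    have h1 : n - i + 1 - 1 = n - i := by omega
    have h2 : x + (n - i + 1) * z = x + z + (n - i) * z := by ring
    rw [h1, h2]
  rw [hc, hC]
  rcases Nat.eq_zero_or_pos i with h0 | hpos
  · subst h0
    rw [if_pos (by omega)]
    simp [abelC]
  · rw [if_neg (by omega)]
    have h4 : n - (n - i) = i := by omega
    rw [h4]
    rw [abelC, if_neg (by omega)]
    ring

lemma S_rec (z n x y : ℕ) :
    Sab z (n+1) x y = y * Aab z n x (y+z) + x * Aab z n y (x+z) := by
  rw [Sab]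
  rw [Finset.sum_range_succ'
    (fun k => (n+1).choose k * abelC z x k *
      (if k = n+1 then 1 else y * (y + (n + 1 - k) * z) ^ (n + 1 - k - 1))) (n+1)]
  have h0 : (n+1).choose 0 * abelC z x 0 *
      (if 0 = n+1 then 1 else y * (y + (n + 1 - 0) * z) ^ (n + 1 - 0 - 1))
      = y * (y + (n+1) * z) ^ n := by
    simp [abelC]
  rw [h0]
  have hterm : ∀ i ∈ range (n+1), (n+1).choose (i+1) * abelC z x (i+1) *
      (if i+1 = n+1 then 1 else y * (y + (n + 1 - (i+1)) * z) ^ (n + 1 - (i+1) - 1))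
      = (n.choose (i+1) * abelC z x (i+1) *
          (if i+1 = n+1 then 1 else y * (y + (n - i) * z) ^ (n - i - 1)))
        + (n.choose i * abelC z x (i+1) *
          (if i+1 = n+1 then 1 else y * (y + (n - i) * z) ^ (n - i - 1))) := by
    intro i hi
    have h1 : n + 1 - (i+1) = n - i := by omega
    have h2 : n + 1 - (i+1) - 1 = n - i - 1 := by omega
    rw [h1, Nat.choose_succ_succ', add_mul, add_mul]; ring
  rw [Finset.sum_congr rfl hterm, Finset.sum_add_distrib]
  rw [add_right_comm, ← e1_lemma, e2_lemma]

lemma A_rec (z n x y : ℕ) :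
    Aab z (n+1) x y = Sab z (n+1) x y + (n+1) * z * Aab z n x (y+z) := by
  rw [Aab, Sab]
  have hterm : ∀ k ∈ range (n+2), (n+1).choose k * abelC z x k * (y + (n + 1 - k) * z) ^ (n + 1 - k)
      = ((n+1).choose k * abelC z x k *
          (if k = n+1 then 1 else y * (y + (n + 1 - k) * z) ^ (n + 1 - k - 1)))
        + (n+1) * z * (n.choose k * abelC z x k * (y + z + (n - k) * z) ^ (n - k)) := by
    intro k hk
    have hk' : k < n + 2 := Finset.mem_range.mp hk
    rcases Nat.lt_or_ge k (n+1) with hlt | hge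
    · rw [if_neg (by omega)]
      have h1 : n + 1 - k = (n - k) + 1 := by omega
      have h2 : n + 1 - k - 1 = n - k := by omega
      have h3 : y + (n + 1 - k) * z = y + z + (n - k) * z := by
        rw [h1]; ring
      have h4 : (n+1-k) * ((n+1).choose k) = (n+1) * (n.choose k) := by
        rw [mul_comm, ← Nat.choose_succ_right_eq, ← Nat.add_one_mul_choose_eq]
      rw [h2, h3]
      rw [h1, pow_succ]
      have expand : y + z + (n - k) * z = y + (z + (n-k)*z) := by ring
      calc (n+1).choose k * abelC z x k * ((y + z + (n - k) * z) ^ (n - k) * (y + z + (n - k) * z))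
          = (n+1).choose k * abelC z x k * ((y + z + (n - k) * z) ^ (n - k)) * y
            + ((n+1-k) * ((n+1).choose k)) * (abelC z x k * ((y + z + (n - k) * z) ^ (n - k)) * z) := by
            rw [h1]; ring
        _ = _ := by rw [h4]; ring
    · have hkeq : k = n + 1 := by omega
      subst hkeq
      rw [if_pos rfl]
      simp [Nat.choose_succ_self]
  rw [Finset.sum_congr rfl hterm, Finset.sum_add_distrib]
  congr 1
  rw [Aab, Finset.mul_sum]
  rw [Finset.sum_range_succ
    (fun k => (n+1) * z * (n.choose k * abelC z x k * (y + z + (n - k) * z) ^ (n - k))) (n+1)]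
  simp [Nat.choose_succ_self]

theorem abel_pair (z : ℕ) : ∀ n, (∀ x y, Aab z n x y = (x + y + n * z) ^ n) ∧
    (∀ x y, Sab z n x y = if n = 0 then 1 else (x + y) * (x + y + n * z) ^ (n - 1)) := by
  intro n
  induction n with
  | zero => constructor <;> intro x y <;> simp [Aab, Sab, abelC]
  | succ n ih =>
    obtain ⟨ihA, _⟩ := ih
    have hS : ∀ x y, Sab z (n+1) x y = (x + y) * (x + y + (n+1) * z) ^ n := by
      intro x y
      rw [S_rec, ihA, ihA]
      have h1 : x + (y + z) + n * z = x + y + (n+1) * z := by ring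
      have h2 : y + (x + z) + n * z = x + y + (n+1) * z := by ring
      rw [h1, h2]; ring
    constructor
    · intro x y
      rw [A_rec, hS, ihA]
      have h1 : x + (y + z) + n * z = x + y + (n+1) * z := by ring
      rw [h1]
      rw [pow_succ]
      ring
    · intro x y
      rw [hS]
      simp

theorem abel_identity (b a m : ℕ) :
    (a + m * b) ^ m = ∑ k ∈ range (m+1), m.choose k * abelC b a k * ((m - k) * b) ^ (m - k) := by
  have h := (abel_pair b m).1 a 0
  rw [Aab] at h
  simp only [zero_add, add_zero] at h
  exact h.symm

/-- number of entries of `π` that are `≤ s` -/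
def cnt {m : ℕ} (π : Fin m → ℕ) (s : ℕ) : ℕ := (Finset.univ.filter fun i => π i ≤ s).card

lemma cnt_le {m : ℕ} (π : Fin m → ℕ) (s : ℕ) : cnt π s ≤ m := by
  simpa [cnt] using (Finset.card_filter_le Finset.univ fun i => π i ≤ s)

lemma cnt_mono {m : ℕ} (π : Fin m → ℕ) {s t : ℕ} (h : s ≤ t) : cnt π s ≤ cnt π t := by
  apply Finset.card_le_card
  intro i hi
  simp only [Finset.mem_filter, Finset.mem_univ, true_and] at *
  exact le_trans hi h

lemma monotone_le_iff {m : ℕ} (lam : Fin m → ℕ) (hmono : Monotone lam) (k : Fin m) (s : ℕ) :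
    lam k ≤ s ↔ (k : ℕ) + 1 ≤ cnt lam s := by
  constructor
  · intro h
    have hsub : Finset.Iic k ⊆ Finset.univ.filter fun i => lam i ≤ s := by
      intro j hj
      simp only [Finset.mem_Iic] at hj
      simp only [Finset.mem_filter, Finset.mem_univ, true_and]
      exact le_trans (hmono hj) h
    calc (k : ℕ) + 1 = (Finset.Iic k).card := by rw [Fin.card_Iic k]
      _ ≤ _ := Finset.card_le_card hsub
  · intro h
    by_contra hc
    push_neg at hc
    have hsub : (Finset.univ.filter fun i => lam i ≤ s) ⊆ Finset.Iio k := by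
      intro j hj
      simp only [Finset.mem_filter, Finset.mem_univ, true_and] at hj
      simp only [Finset.mem_Iio]
      by_contra hjk
      push_neg at hjk
      exact absurd (le_trans (hmono hjk) hj) (not_le.mpr hc)
    have := Finset.card_le_card hsub
    rw [Fin.card_Iio k] at this
    simp only [cnt] at h
    omega

lemma cnt_comp_perm {m : ℕ} (π : Fin m → ℕ) (σ : Equiv.Perm (Fin m)) (s : ℕ) :
    cnt (fun i => π (σ i)) s = cnt π s := by
  unfold cnt
  apply Finset.card_bij (fun i _ => σ i)
  · intro i hi
    simp only [Finset.mem_filter, Finset.mem_univ, true_and] at *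
    exact hi
  · intro i _ j _ h
    exact σ.injective h
  · intro j hj
    simp only [Finset.mem_filter, Finset.mem_univ, true_and] at *
    exact ⟨σ.symm j, by simpa using hj, by simp⟩

lemma isPF_iff {m : ℕ} (a b : ℕ) (π : Fin m → ℕ) :
    IsParkingFn (fun i : Fin m => a + i.val * b) π ↔
      ((∀ i, 0 < π i) ∧ ∀ k : Fin m, (k : ℕ) + 1 ≤ cnt π (a + (k : ℕ) * b)) := by
  constructor
  · rintro ⟨hpos, σ, hmono, hle⟩
    refine ⟨hpos, fun k => ?_⟩
    rw [← cnt_comp_perm π σ]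
    exact (monotone_le_iff _ hmono k _).mp (hle k)
  · rintro ⟨hpos, hcnt⟩
    refine ⟨hpos, Tuple.sort π, Tuple.monotone_sort π, fun k => ?_⟩
    have hmono := Tuple.monotone_sort π
    exact (monotone_le_iff _ hmono k _).mpr
      (by simpa using (cnt_comp_perm π (Tuple.sort π) (a + (k:ℕ)*b)).symm ▸ hcnt k)

def PFbox (a b m : ℕ) : Finset (Fin m → ℕ) := Fintype.piFinset fun _ => Finset.Icc 1 (a + m * b)

def PFs (a b m : ℕ) : Finset (Fin m → ℕ) :=
  (PFbox a b m).filter fun π => ∀ k : Fin m, (k : ℕ) + 1 ≤ cnt π (a + (k : ℕ) * b)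

lemma card_PFbox (a b m : ℕ) : (PFbox a b m).card = (a + m * b) ^ m := by
  rw [PFbox, Fintype.card_piFinset]
  simp [Nat.card_Icc]

open scoped Classical in
noncomputable def brk (a b : ℕ) {m : ℕ} (π : Fin m → ℕ) : ℕ :=
  if h : ∃ j, j < m ∧ cnt π (a + j * b) < j + 1 then Nat.find h else m

lemma brk_le (a b : ℕ) {m : ℕ} (π : Fin m → ℕ) : brk a b π ≤ m := by
  rw [brk]
  split
  · next h => exact le_of_lt (Nat.find_spec h).1
  · exact le_rfl

lemma brk_good (a b : ℕ) {m : ℕ} (π : Fin m → ℕ) {j : ℕ} (hj : j < brk a b π) :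
    j + 1 ≤ cnt π (a + j * b) := by
  rw [brk] at hj
  by_contra hc
  push_neg at hc
  have hjm : j < m := by
    rcases le_or_gt m j with h | h
    · exfalso
      split at hj
      · next hex => exact absurd ((Nat.find_spec hex).1) (by omega)
      · omega
    · exact h
  split at hj
  · next hex => exact absurd ⟨hjm, hc⟩ (Nat.find_min hex hj)
  · next hex => exact hex ⟨j, hjm, hc⟩

lemma brk_fail (a b : ℕ) {m : ℕ} (π : Fin m → ℕ) (h : brk a b π < m) :
    cnt π (a + brk a b π * b) ≤ brk a b π := by
  rw [brk] at h ⊢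
  split at h
  · next hex =>
    rw [dif_pos hex]
    have := (Nat.find_spec hex).2
    omega
  · omega

lemma brk_eq_of (a b : ℕ) {m : ℕ} (π : Fin m → ℕ) (k : ℕ) (hk : k ≤ m)
    (hgood : ∀ j < k, j + 1 ≤ cnt π (a + j * b))
    (hfail : k = m ∨ cnt π (a + k * b) < k + 1) : brk a b π = k := by
  rcases hfail with rfl | hfail
  · rw [brk, dif_neg]
    rintro ⟨j, hj, hc⟩
    exact absurd (hgood j hj) (by omega)
  · rcases eq_or_lt_of_le hk with rfl | hkm
    · rw [brk, dif_neg]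
      rintro ⟨j, hj, hc⟩
      exact absurd (hgood j hj) (by omega)
    · have hex : ∃ j, j < m ∧ cnt π (a + j * b) < j + 1 := ⟨k, hkm, hfail⟩
      rw [brk, dif_pos hex, Nat.find_eq_iff]
      exact ⟨⟨hkm, hfail⟩, fun j hj ⟨_, hc⟩ => absurd (hgood j hj) (by omega)⟩

lemma cnt_restrict {m k : ℕ} (π : Fin m → ℕ) (S : Finset (Fin m)) (hS : S.card = k)
    (s : ℕ) (hout : ∀ i, i ∉ S → s < π i) :
    cnt (fun j : Fin k => π (S.orderIsoOfFin hS j)) s = cnt π s := by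
  unfold cnt
  apply Finset.card_bij (fun j _ => ((S.orderIsoOfFin hS j : {x // x ∈ S}) : Fin m))
  · intro j hj
    simp only [Finset.mem_filter, Finset.mem_univ, true_and] at *
    exact hj
  · intro j1 _ j2 _ h
    exact (S.orderIsoOfFin hS).injective (Subtype.ext h)
  · intro i hi
    simp only [Finset.mem_filter, Finset.mem_univ, true_and] at hi
    have hiS : i ∈ S := by
      by_contra hc
      exact absurd hi (not_le.mpr (hout i hc))
    refine ⟨(S.orderIsoOfFin hS).symm ⟨i, hiS⟩, ?_, ?_⟩
    · simp only [Finset.mem_filter, Finset.mem_univ, true_and]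
      simpa using hi
    · simp

lemma fiber_card (a b m k : ℕ) (hk : k ≤ m) (S : Finset (Fin m)) (hS : S.card = k) :
    ((PFbox a b m).filter fun π => brk a b π = k ∧
        Finset.univ.filter (fun i => π i ≤ a + k * b) = S).card
      = (PFs a b k).card * ((m - k) * b) ^ (m - k) := by
  classical
  set e := S.orderIsoOfFin hS with he
  set T : Finset ({i // i ∈ Sᶜ} → ℕ) :=
    Fintype.piFinset fun _ => Finset.Icc (a + k * b + 1) (a + m * b) with hT
  have hcard2 : T.card = ((m - k) * b) ^ (m - k) := by
    rw [hT, Fintype.card_piFinset, Finset.prod_const, Nat.card_Icc]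
    have h1 : a + m * b + 1 - (a + k * b + 1) = (m - k) * b := by
      rw [tsub_mul]; omega
    have h2 : Fintype.card {i // i ∈ Sᶜ} = m - k := by
      rw [Fintype.card_coe, Finset.card_compl, hS, Fintype.card_fin]
    rw [h1, Finset.card_univ, h2]
  have hprod : ((PFs a b k) ×ˢ T).card = (PFs a b k).card * ((m - k) * b) ^ (m - k) := by
    rw [Finset.card_product, hcard2]
  rw [← hprod]
  apply Finset.card_nbij'
    (i := fun π => (fun j => π (e j), fun i => π i.1))
    (j := fun p => fun i => if h : i ∈ S then p.1 (e.symm ⟨i, h⟩) else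
      p.2 ⟨i, Finset.mem_compl.mpr h⟩)
  · -- forward membership
    intro π hπ
    simp only [Finset.mem_coe, Finset.mem_filter] at hπ
    obtain ⟨hbox, hbrk, hset⟩ := hπ
    have hboxmem : ∀ i, 1 ≤ π i ∧ π i ≤ a + m * b := by
      intro i
      have := Fintype.mem_piFinset.mp hbox i
      simpa [Finset.mem_Icc] using this
    have hin : ∀ i, i ∈ S → π i ≤ a + k * b := by
      intro i hi
      rw [← hset] at hi
      exact (Finset.mem_filter.mp hi).2
    have hout : ∀ i, i ∉ S → a + k * b < π i := by
      intro i hi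
      rw [← hset] at hi
      by_contra hc
      exact hi (Finset.mem_filter.mpr ⟨Finset.mem_univ i, not_lt.mp hc⟩)
    rw [Finset.mem_coe, Finset.mem_product]
    constructor
    · rw [PFs, Finset.mem_filter]
      constructor
      · rw [PFbox, Fintype.mem_piFinset]
        intro j
        rw [Finset.mem_Icc]
        exact ⟨(hboxmem _).1, hin _ (e j).2⟩
      · intro j
        have hcnt : cnt (fun j : Fin k => π (e j)) (a + (j : ℕ) * b) = cnt π (a + (j : ℕ) * b) := by
          apply cnt_restrict
          intro i hi
          have hjk : (j : ℕ) * b ≤ k * b := Nat.mul_le_mul_right b (le_of_lt j.2)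
          have := hout i hi
          omega
        rw [hcnt]
        apply brk_good
        rw [hbrk]
        exact j.2
    · show (fun i : {i // i ∈ Sᶜ} => π i.1) ∈ T
      rw [hT, Fintype.mem_piFinset]
      intro i
      rw [Finset.mem_Icc]
      have h1 := hout i.1 (Finset.mem_compl.mp i.2)
      exact ⟨by omega, (hboxmem _).2⟩
  · -- backward membership
    intro p hp
    rw [Finset.mem_coe, Finset.mem_product] at hp
    obtain ⟨hp1, hp2⟩ := hp
    rw [PFs, Finset.mem_filter] at hp1
    obtain ⟨hp1box, hp1cnt⟩ := hp1
    have hp1mem : ∀ j, 1 ≤ p.1 j ∧ p.1 j ≤ a + k * b := by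
      intro j
      have := Fintype.mem_piFinset.mp hp1box j
      simpa [Finset.mem_Icc, PFbox] using this
    have hp2mem : ∀ i, a + k * b + 1 ≤ p.2 i ∧ p.2 i ≤ a + m * b := by
      intro i
      have := Fintype.mem_piFinset.mp hp2 i
      simpa [Finset.mem_Icc, hT] using this
    set π : Fin m → ℕ := fun i => if h : i ∈ S then p.1 (e.symm ⟨i, h⟩) else
      p.2 ⟨i, Finset.mem_compl.mpr h⟩ with hπ
    have hπin : ∀ i (h : i ∈ S), π i = p.1 (e.symm ⟨i, h⟩) := by
      intro i h; rw [hπ]; simp [h]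
    have hπout : ∀ i (h : i ∉ S), π i = p.2 ⟨i, Finset.mem_compl.mpr h⟩ := by
      intro i h; rw [hπ]; simp [h]
    have hset : Finset.univ.filter (fun i => π i ≤ a + k * b) = S := by
      ext i
      simp only [Finset.mem_filter, Finset.mem_univ, true_and]
      constructor
      · intro hle
        by_contra hc
        rw [hπout i hc] at hle
        have := (hp2mem ⟨i, Finset.mem_compl.mpr hc⟩).1
        omega
      · intro hi
        rw [hπin i hi]
        exact (hp1mem _).2
    have hcnt_eq : ∀ s : ℕ, s ≤ a + k * b → cnt π s = cnt p.1 s := by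
      intro s hs
      have : cnt (fun j : Fin k => π (e j)) s = cnt π s := by
        apply cnt_restrict
        intro i hi
        rw [hπout i hi]
        have := (hp2mem ⟨i, Finset.mem_compl.mpr hi⟩).1
        omega
      rw [← this]
      congr 1
      funext j
      rw [hπin _ (e j).2]
      congr 1
      simp
    have hcntS : cnt π (a + k * b) = k := by
      rw [cnt, hset, hS]
    rw [Finset.mem_coe]
    change π ∈ _
    refine Finset.mem_filter.mpr ⟨?_, ?_, hset⟩
    · rw [PFbox, Fintype.mem_piFinset]
      intro i
      rw [Finset.mem_Icc]
      by_cases h : i ∈ S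
      · rw [hπin i h]
        have h1 := (hp1mem (e.symm ⟨i, h⟩)).1
        have h2 := (hp1mem (e.symm ⟨i, h⟩)).2
        have hkb : k * b ≤ m * b := Nat.mul_le_mul_right b hk
        omega
      · rw [hπout i h]
        have h1 := (hp2mem ⟨i, Finset.mem_compl.mpr h⟩).1
        have h2 := (hp2mem ⟨i, Finset.mem_compl.mpr h⟩).2
        omega
    · apply brk_eq_of a b π k hk
      · intro j hj
        have hjs : a + j * b ≤ a + k * b := by
          have := Nat.mul_le_mul_right b (le_of_lt hj)
          omega
        rw [hcnt_eq _ hjs]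
        exact hp1cnt ⟨j, hj⟩
      · rcases eq_or_lt_of_le hk with rfl | hkm
        · exact Or.inl rfl
        · right
          omega
  · -- left inverse
    intro π hπ
    funext i
    by_cases h : i ∈ S
    · simp only [dif_pos h]
      congr 1
      have : e (e.symm ⟨i, h⟩) = ⟨i, h⟩ := e.apply_symm_apply _
      rw [this]
    · simp only [dif_neg h]
  · -- right inverse
    intro p hp
    ext
    · next j =>
      simp only
      rw [dif_pos (e j).2]
      congr 1
      have : (⟨(e j : Fin m), (e j).2⟩ : {x // x ∈ S}) = e j := rfl
      rw [this, e.symm_apply_apply]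
    · next i =>
      simp only
      rw [dif_neg (Finset.mem_compl.mp i.2)]

lemma level_card (a b m k : ℕ) (hk : k ≤ m) :
    ((PFbox a b m).filter fun π => brk a b π = k).card
      = m.choose k * ((PFs a b k).card * ((m - k) * b) ^ (m - k)) := by
  classical
  rw [Finset.card_eq_sum_card_fiberwise
    (f := fun π => Finset.univ.filter (fun i => π i ≤ a + k * b))
    (t := Finset.powersetCard k Finset.univ) ?_]
  · have hsum : ∀ S ∈ Finset.powersetCard k (Finset.univ : Finset (Fin m)),
        (((PFbox a b m).filter fun π => brk a b π = k).filter
          (fun π => Finset.univ.filter (fun i => π i ≤ a + k * b) = S)).card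
        = (PFs a b k).card * ((m - k) * b) ^ (m - k) := by
      intro S hs
      obtain ⟨_, hSc⟩ := Finset.mem_powersetCard.mp hs
      rw [Finset.filter_filter]
      exact fiber_card a b m k hk S hSc
    rw [Finset.sum_congr rfl hsum, Finset.sum_const, Finset.card_powersetCard,
      Finset.card_univ, Fintype.card_fin, smul_eq_mul]
  · intro π hπ
    rw [Finset.mem_coe, Finset.mem_filter] at hπ
    obtain ⟨hbox, hbrk⟩ := hπ
    rw [Finset.mem_coe, Finset.mem_powersetCard]
    refine ⟨Finset.subset_univ _, ?_⟩
    show (Finset.univ.filter (fun i => π i ≤ a + k * b)).card = k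
    have hboxmem : ∀ i, 1 ≤ π i ∧ π i ≤ a + m * b := by
      intro i
      have := Fintype.mem_piFinset.mp hbox i
      simpa [Finset.mem_Icc] using this
    rcases eq_or_lt_of_le hk with rfl | hkm
    · have : Finset.univ.filter (fun i => π i ≤ a + k * b) = Finset.univ := by
        apply Finset.filter_true_of_mem
        intro i _
        exact (hboxmem i).2
      rw [this, Finset.card_univ, Fintype.card_fin]
    · have hle : cnt π (a + k * b) ≤ k := by
        rw [← hbrk] at hkm ⊢
        exact brk_fail a b π hkm
      have hge : k ≤ cnt π (a + k * b) := by
        rcases Nat.eq_zero_or_pos k with rfl | hpos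
        · exact Nat.zero_le _
        · have h1 : k - 1 < brk a b π := by omega
          have h2 := brk_good a b π h1
          have h3 : cnt π (a + (k-1) * b) ≤ cnt π (a + k * b) := by
            apply cnt_mono
            have : (k-1) * b ≤ k * b := Nat.mul_le_mul_right b (by omega)
            omega
          omega
      exact le_antisymm hle hge

lemma key_identity (a b m : ℕ) :
    (a + m * b) ^ m
      = ∑ k ∈ Finset.range (m + 1), m.choose k * ((PFs a b k).card * ((m - k) * b) ^ (m - k)) := by
  classical
  rw [← card_PFbox a b m]
  rw [Finset.card_eq_sum_card_fiberwise (f := brk a b) (t := Finset.range (m + 1))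
    (fun π _ => Finset.mem_range.mpr (by have := brk_le a b π; omega))]
  apply Finset.sum_congr rfl
  intro k hk
  exact level_card a b m k (by have := Finset.mem_range.mp hk; omega)

lemma PFs_card (a b : ℕ) : ∀ m, (PFs a b m).card = if m = 0 then 1 else a * (a + m * b) ^ (m - 1) := by
  intro m
  induction m using Nat.strong_induction_on with
  | _ m ih =>
    rcases Nat.eq_zero_or_pos m with rfl | hm
    · rw [if_pos rfl, PFs,
        Finset.filter_true_of_mem (fun π _ => fun k : Fin 0 => k.elim0), card_PFbox]
      simp
    · rw [if_neg (by omega)]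
      have hkey := key_identity a b m
      have habel := abel_identity b a m
      rw [Finset.sum_range_succ] at hkey habel
      have hterm : ∀ k ∈ Finset.range m, m.choose k * ((PFs a b k).card * ((m - k) * b) ^ (m - k))
          = m.choose k * abelC b a k * ((m - k) * b) ^ (m - k) := by
        intro k hk
        have hkm := Finset.mem_range.mp hk
        rw [ih k hkm, abelC]
        ring
      rw [Finset.sum_congr rfl hterm] at hkey
      simp only [Nat.sub_self, Nat.choose_self, pow_zero, mul_one, one_mul, zero_mul] at hkey habel
      rw [abelC, if_neg (by omega)] at habel
      omega

/-- The number of `(a,b)`-parking functions of length `m` is `a (a+mb)^(m-1)`. -/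
theorem ab_parking_count (a b m : ℕ) (ha : 0 < a) (hb : 0 < b) (hm : 0 < m) :
    Set.ncard {π : Fin m → ℕ | IsParkingFn (fun i => a + i.val * b) π} =
      a * (a + m * b) ^ (m - 1) := by
  classical
  have hset : {π : Fin m → ℕ | IsParkingFn (fun i => a + i.val * b) π} = ↑(PFs a b m) := by
    ext π
    simp only [Set.mem_setOf_eq, Finset.mem_coe]
    rw [isPF_iff]
    constructor
    · rintro ⟨hpos, hcnt⟩
      rw [PFs, Finset.mem_filter]
      refine ⟨?_, hcnt⟩
      rw [PFbox, Fintype.mem_piFinset]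
      intro i
      rw [Finset.mem_Icc]
      refine ⟨hpos i, ?_⟩
      have h1 : (m - 1) + 1 ≤ cnt π (a + (m-1) * b) := hcnt ⟨m - 1, by omega⟩
      have huniv : Finset.univ.filter (fun j => π j ≤ a + (m-1) * b) = Finset.univ := by
        apply Finset.eq_univ_of_card
        have hle := cnt_le π (a + (m-1) * b)
        rw [Fintype.card_fin]
        have hc : cnt π (a + (m-1) * b)
            = (Finset.univ.filter (fun j => π j ≤ a + (m-1) * b)).card := rfl
        omega
      have hi : i ∈ Finset.univ.filter (fun j => π j ≤ a + (m-1) * b) := by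
        rw [huniv]; exact Finset.mem_univ i
      have h2 := (Finset.mem_filter.mp hi).2
      have h3 : (m-1) * b ≤ m * b := Nat.mul_le_mul_right b (by omega)
      omega
    · intro hmem
      rw [PFs, Finset.mem_filter] at hmem
      obtain ⟨hbox, hcnt⟩ := hmem
      refine ⟨?_, hcnt⟩
      intro i
      have := Fintype.mem_piFinset.mp hbox i
      simp only [Finset.mem_Icc] at this
      omega
  rw [hset, Set.ncard_coe_finset, PFs_card a b m, if_neg (by omega)]
end

section
/- Let v = (v₁,...,v_l) be non-decreasing and maximal (in component-wise order among non-decreasing vectors) such that (v₁,...,v_l,π_{l+1},...,πₘ) is a u-parking function, for fixed π_{l+1},...,πₘ. Then for each 1 ≤ i ≤ l there exists an index kᵢ with vᵢ = u_{kᵢ}, the kᵢ are strictly increasing in i, and vᵢ ≠ π_j for all l+1 ≤ j ≤ m. -/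
open Finset

lemma card_filter_perm {m : ℕ} (σ : Equiv.Perm (Fin m)) (P : Fin m → Prop) [DecidablePred P] :
    #(univ.filter (fun j => P (σ j))) = #(univ.filter P) := by
  apply Finset.card_bij' (fun j _ => σ j) (fun j _ => σ.symm j) <;> simp

lemma parking_iff {m : ℕ} (u π : Fin m → ℕ) :
    IsParkingFn u π ↔ (∀ i, 0 < π i) ∧
      ∀ p : Fin m, (p : ℕ) < #(univ.filter (fun j => π j ≤ u p)) := by
  constructor
  · rintro ⟨hpos, σ, hmono, hle⟩
    refine ⟨hpos, fun p => ?_⟩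
    rw [← card_filter_perm σ (fun j => π j ≤ u p)]
    have h1 : Finset.Iic p ⊆ univ.filter (fun j => π (σ j) ≤ u p) := by
      intro j hj
      simp only [Finset.mem_Iic] at hj
      simp only [Finset.mem_filter, Finset.mem_univ, true_and]
      exact le_trans (hmono hj) (hle p)
    calc (p : ℕ) < (p : ℕ) + 1 := Nat.lt_succ_self _
      _ = #(Finset.Iic p) := (Fin.card_Iic p).symm
      _ ≤ _ := Finset.card_le_card h1
  · rintro ⟨hpos, hcard⟩
    refine ⟨hpos, Tuple.sort π, Tuple.monotone_sort π, fun p => ?_⟩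
    by_contra hlt
    push_neg at hlt
    have hsub : univ.filter (fun j => π (Tuple.sort π j) ≤ u p) ⊆ Finset.Iio p := by
      intro j hj
      simp only [Finset.mem_filter, Finset.mem_univ, true_and] at hj
      simp only [Finset.mem_Iio]
      by_contra hge
      push_neg at hge
      have h2 : π (Tuple.sort π p) ≤ π (Tuple.sort π j) := Tuple.monotone_sort π hge
      omega
    have h3 := Finset.card_le_card hsub
    rw [Fin.card_Iio] at h3
    rw [card_filter_perm (Tuple.sort π) (fun j => π j ≤ u p)] at h3
    exact absurd (hcard p) (not_lt.mpr h3)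

lemma parking_bound {m : ℕ} {u π : Fin m → ℕ} (hu : Monotone u)
    (h : IsParkingFn u π) (a : ℕ) (x : Fin m) (hx : a ≤ π x)
    (p : Fin m) (hp : #(univ.filter (fun j => π j < a)) ≤ (p : ℕ)) :
    a ≤ u p := by
  obtain ⟨-, σ, hmono, hle⟩ := h
  have hTne : (univ.filter (fun j => a ≤ π (σ j))).Nonempty := ⟨σ.symm x, by simp [hx]⟩
  set q := (univ.filter (fun j => a ≤ π (σ j))).min' hTne with hq
  have hqT : a ≤ π (σ q) := by
    have := Finset.min'_mem _ hTne
    simpa using this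
  have heq : univ.filter (fun j => π (σ j) < a) = Finset.Iio q := by
    ext j
    simp only [Finset.mem_filter, Finset.mem_univ, true_and, Finset.mem_Iio]
    constructor
    · intro hj
      by_contra hge
      push_neg at hge
      have : a ≤ π (σ j) := le_trans hqT (hmono hge)
      omega
    · intro hj
      by_contra hge
      push_neg at hge
      have : q ≤ j := Finset.min'_le _ j (by simp [hge])
      exact absurd hj (not_lt.mpr this)
  have hcard : #(univ.filter (fun j => π j < a)) = (q : ℕ) := by
    rw [← card_filter_perm σ (fun j => π j < a)]
    rw [show (univ.filter (fun j => π (σ j) < a)) = Finset.Iio q from heq, Fin.card_Iio]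
  have hq_le : (q : ℕ) ≤ (p : ℕ) := by omega
  calc a ≤ π (σ q) := hqT
    _ ≤ u q := hle q
    _ ≤ u p := hu hq_le

lemma append_update_left {l r : ℕ} (v : Fin l → ℕ) (t : Fin r → ℕ) (x : Fin l) (c : ℕ) :
    Fin.append (Function.update v x c) t
      = Function.update (Fin.append v t) (Fin.castAdd r x) c := by
  ext j
  induction j using Fin.addCases with
  | left j =>
    rw [Fin.append_left, Function.update_apply, Function.update_apply]
    by_cases h : j = x
    · simp [h]
    · have hne : Fin.castAdd r j ≠ Fin.castAdd r x := by
        intro hc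
        exact h (Fin.ext (by simpa using congrArg Fin.val hc))
      rw [if_neg h, if_neg hne, Fin.append_left]
  | right j =>
    rw [Fin.append_right, Function.update_apply]
    have hne : Fin.natAdd l j ≠ Fin.castAdd r x := by
      intro hc
      have hval := congrArg Fin.val hc
      simp only [Fin.coe_natAdd, Fin.coe_castAdd] at hval
      have := x.isLt
      omega
    rw [if_neg hne, Fin.append_right]

lemma filter_update_le_of_ne {m : ℕ} (f : Fin m → ℕ) (x : Fin m) (a b : ℕ)
    (hfx : f x = a) (hb : b ≠ a) :
    univ.filter (fun j => Function.update f x (a + 1) j ≤ b)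
      = univ.filter (fun j => f j ≤ b) := by
  ext j
  simp only [Finset.mem_filter, Finset.mem_univ, true_and, Function.update_apply]
  by_cases h : j = x
  · subst h; rw [if_pos rfl, hfx]; omega
  · rw [if_neg h]

lemma filter_update_le_self {m : ℕ} (f : Fin m → ℕ) (x : Fin m) (a : ℕ)
    (hfx : f x = a) :
    univ.filter (fun j => Function.update f x (a + 1) j ≤ a)
      = (univ.filter (fun j => f j ≤ a)).erase x := by
  ext j
  simp only [Finset.mem_filter, Finset.mem_univ, true_and, Finset.mem_erase,
    Function.update_apply]
  by_cases h : j = x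
  · subst h; simp
  · rw [if_neg h]; simp [h]

/-- If `v` is non-decreasing and maximal (component-wise, among non-decreasing vectors)
such that `(v, t)` is a `u`-parking function, then each `v i` equals `u (k i)` for some
strictly increasing sequence of indices `k`, and no `v i` occurs among the fixed tail `t`. -/
theorem maximal_v_structure (l r : ℕ) (u : Fin (l + r) → ℕ) (hu : StrictMono u)
    (hupos : ∀ i, 0 < u i) (t : Fin r → ℕ) (v : Fin l → ℕ) (hvmono : Monotone v)
    (hpf : IsParkingFn u (Fin.append v t))
    (hmax : ∀ w : Fin l → ℕ, Monotone w → IsParkingFn u (Fin.append w t) → ¬ v < w) :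
    ∃ k : Fin l → Fin (l + r), StrictMono k ∧ (∀ i, v i = u (k i)) ∧
      ∀ i j, v i ≠ t j := by
  set π := Fin.append v t with hπ
  clear_value π
  obtain ⟨hpos, hcount⟩ := (parking_iff u π).mp hpf
  have key : ∀ i : Fin l, ∃ p : Fin (l + r), u p = v i ∧
      ∀ j : Fin (l + r), π j = v i → j = Fin.castAdd r i := by
    intro i
    set a := v i with ha
    clear_value a
    -- last index of the block of value `a`
    have hne : (univ.filter (fun j : Fin l => v j = a)).Nonempty := ⟨i, by simp [ha]⟩
    set i' := (univ.filter (fun j : Fin l => v j = a)).max' hne with hi'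
    clear_value i'
    have hvi' : v i' = a := by
      have h0 := Finset.max'_mem _ hne
      rw [← hi'] at h0
      simpa using h0
    have hgt : ∀ j, i' < j → a < v j := by
      intro j hj
      have h1 : a ≤ v j := hvi' ▸ hvmono hj.le
      rcases lt_or_eq_of_le h1 with h | h
      · exact h
      · have h1 := Finset.le_max' (univ.filter (fun j : Fin l => v j = a)) j (by simp [h.symm])
        rw [← hi'] at h1
        exact absurd h1 (not_le.mpr hj)
    set w := Function.update v i' (a + 1) with hw
    clear_value w
    have hwmono : Monotone w := by
      intro j₁ j₂ hj
      rw [hw]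
      simp only [Function.update_apply]
      by_cases h1 : j₁ = i' <;> by_cases h2 : j₂ = i'
      · simp [h1, h2]
      · rw [if_pos h1, if_neg h2]
        exact hgt j₂ (lt_of_le_of_ne (h1 ▸ hj) (Ne.symm h2))
      · rw [if_neg h1, if_pos h2]
        have : v j₁ ≤ a := hvi' ▸ hvmono (h2 ▸ hj)
        omega
      · rw [if_neg h1, if_neg h2]; exact hvmono hj
    have hvlt : v < w := by
      rw [Pi.lt_def]
      constructor
      · intro j
        rw [hw, Function.update_apply]
        by_cases h : j = i'
        · subst h
          rw [if_pos rfl, hvi']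
          exact Nat.le_succ a
        · rw [if_neg h]
      · exact ⟨i', by rw [hw, Function.update_self, hvi']; omega⟩
    have hnpark : ¬ IsParkingFn u (Fin.append w t) := fun h => hmax w hwmono h hvlt
    have happ : Fin.append w t = Function.update π (Fin.castAdd r i') (a + 1) := by
      rw [hw, hπ, append_update_left]
    have hπX : π (Fin.castAdd r i') = a := by rw [hπ, Fin.append_left, hvi']
    have hpos' : ∀ jj, 0 < Fin.append w t jj := by
      intro jj
      rw [happ, Function.update_apply]
      by_cases h : jj = Fin.castAdd r i'
      · rw [if_pos h]; omega
      · rw [if_neg h]; exact hpos jj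
    rw [parking_iff] at hnpark
    push_neg at hnpark
    obtain ⟨p, hp⟩ := hnpark hpos'
    rw [happ] at hp
    have hupa : u p = a := by
      by_contra hne'
      rw [filter_update_le_of_ne π _ a (u p) hπX hne'] at hp
      exact absurd (hcount p) (not_lt.mpr hp)
    rw [hupa, filter_update_le_self π _ a hπX] at hp
    have hXmem : Fin.castAdd r i' ∈ univ.filter (fun j => π j ≤ a) := by
      simp [hπX]
    have hXpos : 0 < #(univ.filter (fun j => π j ≤ a)) :=
      Finset.card_pos.mpr ⟨_, hXmem⟩
    have herase := Finset.card_erase_of_mem hXmem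
    have hcard_le : #(univ.filter (fun j => π j ≤ a)) ≤ (p : ℕ) + 1 := by omega
    -- now use the parking property of v itself
    have hXi : π (Fin.castAdd r i) = a := by rw [hπ, Fin.append_left, ha]
    have hNlt : #(univ.filter (fun j => π j < a)) < l + r := by
      have hsub : univ.filter (fun j => π j < a) ⊆ univ.erase (Fin.castAdd r i) := by
        intro j hj
        simp only [Finset.mem_filter, Finset.mem_univ, true_and] at hj
        simp only [Finset.mem_erase, Finset.mem_univ, and_true]
        intro hje; rw [hje, hXi] at hj; omega
      have h1 := Finset.card_le_card hsub
      rw [Finset.card_erase_of_mem (Finset.mem_univ _), Finset.card_univ,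
        Fintype.card_fin] at h1
      have h2 : 0 < l + r := (Fin.castAdd r i).pos
      omega
    have haN : a ≤ u ⟨_, hNlt⟩ :=
      parking_bound hu.monotone hpf a (Fin.castAdd r i) hXi.ge ⟨_, hNlt⟩ (le_refl _)
    have hpN : (p : ℕ) ≤ #(univ.filter (fun j => π j < a)) := by
      have h1 : u p ≤ u ⟨_, hNlt⟩ := by rw [hupa]; exact haN
      have h2 := hu.le_iff_le.mp h1
      simpa [Fin.le_def] using h2
    have hsplit : #(univ.filter (fun j => π j ≤ a)) =
        #(univ.filter (fun j => π j < a)) + #(univ.filter (fun j => π j = a)) := by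
      have hun : univ.filter (fun j : Fin (l + r) => π j ≤ a)
          = univ.filter (fun j => π j < a) ∪ univ.filter (fun j => π j = a) := by
        ext j
        simp only [Finset.mem_filter, Finset.mem_union, Finset.mem_univ, true_and]
        omega
      rw [hun, Finset.card_union_of_disjoint]
      rw [Finset.disjoint_left]
      intro j hj1 hj2
      simp only [Finset.mem_filter, Finset.mem_univ, true_and] at hj1 hj2
      omega
    have hone : #(univ.filter (fun j => π j = a)) ≤ 1 := by omega
    refine ⟨p, hupa, fun j hj => ?_⟩
    have hjmem : j ∈ univ.filter (fun j => π j = a) := by simp [hj]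
    have himem : Fin.castAdd r i ∈ univ.filter (fun j => π j = a) := by simp [hXi]
    exact Finset.card_le_one.mp hone j hjmem _ himem
  choose k hk1 hk2 using key
  have hvinj : Function.Injective v := by
    intro i₁ i₂ h
    have h2 : π (Fin.castAdd r i₂) = v i₁ := by rw [hπ, Fin.append_left]; exact h.symm
    have := hk2 i₁ (Fin.castAdd r i₂) h2
    exact (Fin.ext (by simpa using congrArg Fin.val this)).symm
  have hvsm : StrictMono v := hvmono.strictMono_of_injective hvinj
  refine ⟨k, ?_, fun i => (hk1 i).symm, ?_⟩
  · intro i₁ i₂ h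
    have h1 : u (k i₁) < u (k i₂) := by rw [hk1 i₁, hk1 i₂]; exact hvsm h
    exact hu.lt_iff_lt.mp h1
  · intro i j hvt
    have h2 : π (Fin.natAdd l j) = v i := by rw [hπ, Fin.append_right]; exact hvt.symm
    have h3 := hk2 i (Fin.natAdd l j) h2
    have hval := congrArg Fin.val h3
    simp only [Fin.coe_natAdd, Fin.coe_castAdd] at hval
    have := i.isLt
    omega
end

section
/- If (π_{l+1},...,πₘ) ∈ MS(v) with v = (u_{k₁},...,u_{k_l}), then (u_{k₁},...,u_{k_l},π_{l+1},...,πₘ) is a u-parking function, and for each 1 ≤ i ≤ l, replacing u_{kᵢ} by u_{kᵢ}+1 yields a sequence that is not a u-parking function. -/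
/-- A `us`-parking function as a list: positive entries whose non-decreasing
rearrangement is component-wise bounded by `us`. -/
def IsPFL (us w : List ℕ) : Prop :=
  (∀ x ∈ w, 0 < x) ∧ ∃ w' : List ℕ, w.Perm w' ∧ w'.Pairwise (· ≤ ·) ∧
    List.Forall₂ (· ≤ ·) w' us

/-- Interleave blocks `B 0, B 1, ...` with separators `v`:
`interleave [B₀,...,B_l] [v₁,...,v_l] = B₀ ++ v₁ :: B₁ ++ v₂ :: ⋯ ++ v_l :: B_l`. -/
def interleave : List (List ℕ) → List ℕ → List ℕ
  | B :: Bs, x :: xs => B ++ x :: interleave Bs xs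
  | B :: _, [] => B
  | [], _ => []

/-- `t` is a multi-shuffle in `MS(v)`: `u` decomposes into blocks around the entries of `v`,
and `t` is a permutation of the union of words `α₁, α₂ + v₁, ..., α_{l+1} + v_l`, where each
shifted-back word `α_j` is a parking function for the corresponding shifted `u`-segment. -/
def MShuffle (u v t : List ℕ) : Prop :=
  ∃ B w : List (List ℕ), B.length = v.length + 1 ∧ w.length = v.length + 1 ∧
    u = interleave B v ∧
    (∀ j < v.length + 1,
      (∀ x ∈ w.getD j [], (if j = 0 then 0 else v.getD (j - 1) 0) < x) ∧
      IsPFL ((B.getD j []).map (fun y => y - (if j = 0 then 0 else v.getD (j - 1) 0)))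
            ((w.getD j []).map (fun y => y - (if j = 0 then 0 else v.getD (j - 1) 0)))) ∧
    t.Perm w.flatten



open List


lemma forall2_countP_le {w us : List ℕ} (h : List.Forall₂ (· ≤ ·) w us) (a : ℕ) :
    us.countP (fun x => decide (x ≤ a)) ≤ w.countP (fun x => decide (x ≤ a)) := by
  induction h with
  | nil => simp
  | @cons x y l1 l2 hxy _ ih =>
      simp only [countP_cons, decide_eq_true_eq]
      have : (if y ≤ a then 1 else 0) ≤ (if x ≤ a then 1 else 0) := by
        split_ifs with h1 h2
        · omega
        · exact absurd (hxy.trans h1) h2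
        · omega
        · omega
      omega

lemma sorted_countP_ge {w : List ℕ} (hw : w.Pairwise (· ≤ ·)) {k a : ℕ} (hk : k < w.length)
    (h : w[k] ≤ a) : k + 1 ≤ w.countP (fun x => decide (x ≤ a)) := by
  have hsplit : w.countP (fun x => decide (x ≤ a)) =
      (w.take (k+1)).countP (fun x => decide (x ≤ a)) +
      (w.drop (k+1)).countP (fun x => decide (x ≤ a)) := by
    conv_lhs => rw [← take_append_drop (k+1) w]
    exact countP_append
  have htake : (w.take (k+1)).countP (fun x => decide (x ≤ a)) = k + 1 := by
    rw [countP_eq_length.2, length_take]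
    · omega
    · intro x hx
      simp only [decide_eq_true_eq]
      obtain ⟨j, hj, rfl⟩ := mem_iff_getElem.1 hx
      rw [getElem_take]
      have hjk : j ≤ k := by simp [length_take] at hj; omega
      rcases eq_or_lt_of_le hjk with rfl | hlt
      · exact h
      · exact le_trans (List.pairwise_iff_getElem.1 hw j k (by omega) hk hlt) h
  omega

lemma sorted_get_le {w : List ℕ} (hw : w.Pairwise (· ≤ ·)) {k a : ℕ} (hk : k < w.length)
    (h : k + 1 ≤ w.countP (fun x => decide (x ≤ a))) : w[k] ≤ a := by
  by_contra hlt
  push_neg at hlt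
  have hsplit : w.countP (fun x => decide (x ≤ a)) =
      (w.take k).countP (fun x => decide (x ≤ a)) +
      (w.drop k).countP (fun x => decide (x ≤ a)) := by
    conv_lhs => rw [← take_append_drop k w]
    exact countP_append
  have hdrop : (w.drop k).countP (fun x => decide (x ≤ a)) = 0 := by
    rw [countP_eq_zero]
    intro x hx
    simp only [decide_eq_true_eq, not_le]
    obtain ⟨j, hj, rfl⟩ := mem_iff_getElem.1 hx
    rw [getElem_drop]
    rcases Nat.eq_zero_or_pos j with rfl | hj0
    · simpa using hlt
    · have := List.pairwise_iff_getElem.1 hw k (k + j) hk (by rw [length_drop] at hj; omega) (by omega)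
      omega
  have := countP_le_length (l := w.take k) (p := fun x => decide (x ≤ a))
  rw [length_take] at this
  omega

lemma isPFL_countP {us z : List ℕ} (h : IsPFL us z) (a : ℕ) :
    us.countP (fun x => decide (x ≤ a)) ≤ z.countP (fun x => decide (x ≤ a)) := by
  obtain ⟨-, w', hperm, -, hf⟩ := h
  rw [hperm.countP_eq]
  exact forall2_countP_le hf a

lemma isPFL_length {us z : List ℕ} (h : IsPFL us z) : z.length = us.length := by
  obtain ⟨-, w', hperm, -, hf⟩ := h
  rw [hperm.length_eq]
  exact hf.length_eq

lemma isPFL_of_counts {us z : List ℕ} (hpos : ∀ x ∈ z, 0 < x) (hlen : z.length = us.length)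
    (hcnt : ∀ k, k < us.length → k + 1 ≤ z.countP (fun x => decide (x ≤ us.getD k 0))) :
    IsPFL us z := by
  refine ⟨hpos, insertionSort (· ≤ ·) z, (perm_insertionSort _ _).symm,
    pairwise_insertionSort _ _, ?_⟩
  rw [forall₂_iff_get]
  have hl : (insertionSort (· ≤ ·) z).length = z.length := (perm_insertionSort _ _).length_eq
  refine ⟨by omega, ?_⟩
  intro i h1 h2
  simp only [get_eq_getElem]
  refine sorted_get_le (pairwise_insertionSort _ _) h1 ?_
  rw [(perm_insertionSort (· ≤ ·) z).countP_eq]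
  have := hcnt i h2
  rwa [getD_eq_getElem _ _ h2] at this

lemma interleave_perm : ∀ (B : List (List ℕ)) (v : List ℕ), B.length = v.length + 1 →
    (interleave B v).Perm (B.flatten ++ v)
  | B0 :: Bs, [], h => by
      have hBs : Bs = [] := by simpa using h
      subst hBs
      simp [_root_.interleave]
  | B0 :: Bs, x :: xs, h => by
      simp only [_root_.interleave, flatten_cons]
      have ih := interleave_perm Bs xs (by simpa using h)
      calc B0 ++ x :: interleave Bs xs
          ~ B0 ++ x :: (Bs.flatten ++ xs) := ((ih.cons x).append_left B0)
        _ ~ B0 ++ (Bs.flatten ++ x :: xs) := (perm_middle.symm).append_left B0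
        _ = (B0 ++ Bs.flatten) ++ x :: xs := (append_assoc _ _ _).symm

lemma interleave_split : ∀ (j : ℕ) (B : List (List ℕ)) (v : List ℕ),
    B.length = v.length + 1 → j < v.length →
    interleave B v = interleave (B.take (j+1)) (v.take j) ++
      v.getD j 0 :: interleave (B.drop (j+1)) (v.drop (j+1))
  | 0, B0 :: Bs, y :: ys, _, _ => by
      simp [_root_.interleave]
  | j+1, B0 :: Bs, y :: ys, h, hj => by
      have ih := interleave_split j Bs ys (by simpa using h) (by simpa using hj)
      simp only [_root_.interleave, take_succ_cons, drop_succ_cons, getD_cons_succ]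
      rw [ih]
      simp [_root_.interleave]
  | 0, [], v, h, hj => by simp at h
  | j+1, [], v, h, hj => by simp at h
  | 0, B0 :: Bs, [], h, hj => by simp at hj
  | j+1, B0 :: Bs, [], h, hj => by simp at hj

lemma sum_map_le_sum_map (f g : List ℕ → ℕ) : ∀ (L M : List (List ℕ)), L.length = M.length →
    (∀ j, j < L.length → f (L.getD j []) ≤ g (M.getD j [])) →
    (L.map f).sum ≤ (M.map g).sum
  | [], [], _, _ => le_refl _
  | [], C :: M, h, _ => by simp at h
  | A :: L, [], h, _ => by simp at h
  | A :: L, C :: M, h, hp => by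
      simp only [map_cons, sum_cons]
      have h0 := hp 0 (by simp)
      simp only [getD_cons_zero] at h0
      have := sum_map_le_sum_map f g L M (by simpa using h)
        (fun j hj => by simpa using hp (j+1) (by simpa using hj))
      omega

lemma mem_interleave_of_mem_block {B : List (List ℕ)} {v : List ℕ} (h : B.length = v.length + 1)
    {k : ℕ} (hk : k < B.length) {x : ℕ} (hx : x ∈ B.getD k []) : x ∈ interleave B v := by
  rw [(interleave_perm B v h).mem_iff]
  apply mem_append_left
  rw [mem_flatten]
  exact ⟨B.getD k [], by rw [getD_eq_getElem _ _ hk]; exact getElem_mem hk, hx⟩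

lemma interleave_sorted_facts {B : List (List ℕ)} {v : List ℕ} (hB : B.length = v.length + 1)
    (hu : (interleave B v).Pairwise (· < ·)) {i : ℕ} (hi : i < v.length) :
    (∀ k, k ≤ i → ∀ x ∈ B.getD k [], x < v.getD i 0) ∧
    (∀ k, i ≤ k → k < v.length → v.getD i 0 ≤ v.getD k 0) := by
  rw [interleave_split i B v hB hi] at hu
  rw [pairwise_append] at hu
  obtain ⟨h1, h2, h3⟩ := hu
  have hlt : (B.take (i+1)).length = (v.take i).length + 1 := by
    simp [length_take]; omega
  have hld : (B.drop (i+1)).length = (v.drop (i+1)).length + 1 := by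
    simp; omega
  constructor
  · intro k hk x hx
    apply h3 x ?_ _ mem_cons_self
    apply mem_interleave_of_mem_block hlt (k := k) (by rw [length_take]; omega)
    rwa [getD_eq_getElem _ _ (by rw [length_take]; omega), getElem_take,
      ← getD_eq_getElem _ _ (by omega)]
  · intro k hik hk
    rcases eq_or_lt_of_le hik with rfl | hlt2
    · exact le_refl _
    apply le_of_lt
    rcases pairwise_cons.1 h2 with ⟨h4, -⟩
    apply h4
    rw [(interleave_perm _ _ hld).mem_iff]
    apply mem_append_right
    have heq : (v.drop (i+1))[k - (i+1)]'(by rw [length_drop]; omega) = v[k]'hk := by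
      rw [getElem_drop]
      congr 1
      omega
    rw [getD_eq_getElem _ _ hk, ← heq]
    exact getElem_mem _


/-- If `t ∈ MS(v)` with `v = (u_{k₁},...,u_{k_l})`, then `(v, t)` is a `u`-parking function,
and incrementing any single coordinate of `v` destroys the parking property. -/
theorem multishuffle_parking (u v t : List ℕ)
    (hu : u.Pairwise (· < ·)) (hupos : ∀ x ∈ u, 0 < x)
    (hms : MShuffle u v t) :
    IsPFL u (v ++ t) ∧
      ∀ i < v.length, ¬ IsPFL u ((v.set i (v.getD i 0 + 1)) ++ t) := by

  obtain ⟨B, w, hB, hw, huI, hblk, ht⟩ := hms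
  set c : ℕ → ℕ := fun j => if j = 0 then 0 else v.getD (j - 1) 0 with hc
  have hupB : u.Perm (B.flatten ++ v) := huI ▸ interleave_perm B v hB
  have hwpos : ∀ j < v.length + 1, ∀ x ∈ w.getD j [], c j < x := fun j hj => (hblk j hj).1
  have hpf : ∀ j < v.length + 1, IsPFL ((B.getD j []).map (fun y => y - c j))
      ((w.getD j []).map (fun y => y - c j)) := fun j hj => (hblk j hj).2
  have hlenb : ∀ j < v.length + 1, (w.getD j []).length = (B.getD j []).length := by
    intro j hj
    have := isPFL_length (hpf j hj)
    simpa using this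
  have hBgt : ∀ j < v.length + 1, ∀ x ∈ B.getD j [], c j < x := by
    intro j hj x hx
    obtain ⟨hpos, w', hperm, hsort, hf⟩ := hpf j hj
    obtain ⟨k, hk, rfl⟩ := mem_iff_getElem.1 hx
    rw [forall₂_iff_get] at hf
    obtain ⟨hfl, hfg⟩ := hf
    have hkw : k < w'.length := by rw [hfl]; simpa using hk
    have h1 := hfg k hkw (by simpa using hk)
    simp only [get_eq_getElem, getElem_map] at h1
    have h2 : 0 < w'[k] := hpos _ (hperm.mem_iff.2 (getElem_mem hkw))
    omega
  have hcnt : ∀ j < v.length + 1, ∀ a, (B.getD j []).countP (fun x => decide (x ≤ a)) ≤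
      (w.getD j []).countP (fun x => decide (x ≤ a)) := by
    intro j hj a
    by_cases hac : a ≤ c j
    · have h0 : (B.getD j []).countP (fun x => decide (x ≤ a)) = 0 := by
        rw [countP_eq_zero]
        intro x hx
        have := hBgt j hj x hx
        simp only [decide_eq_true_eq]
        omega
      omega
    · push_neg at hac
      have hb : (B.getD j []).countP (fun x => decide (x ≤ a)) =
          ((B.getD j []).map (fun y => y - c j)).countP (fun x => decide (x ≤ a - c j)) := by
        rw [countP_map]
        apply countP_congr
        intro x hx
        have := hBgt j hj x hx
        simp only [Function.comp, decide_eq_true_eq]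
        omega
      have hww : (w.getD j []).countP (fun x => decide (x ≤ a)) =
          ((w.getD j []).map (fun y => y - c j)).countP (fun x => decide (x ≤ a - c j)) := by
        rw [countP_map]
        apply countP_congr
        intro x hx
        have := hwpos j hj x hx
        simp only [Function.comp, decide_eq_true_eq]
        omega
      rw [hb, hww]
      exact isPFL_countP (hpf j hj) _
  have hlent : t.length = B.flatten.length := by
    rw [ht.length_eq, length_flatten, length_flatten]
    have h1 := sum_map_le_sum_map List.length List.length w B (by omega)
      (fun j hj => le_of_eq (hlenb j (by omega)))
    have h2 := sum_map_le_sum_map List.length List.length B w (by omega)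
      (fun j hj => le_of_eq (hlenb j (by omega)).symm)
    omega
  constructor
  · apply isPFL_of_counts
    · intro x hx
      rcases mem_append.1 hx with hxv | hxt
      · exact hupos x (hupB.mem_iff.2 (mem_append_right _ hxv))
      · obtain ⟨wj, hwj, hxw⟩ := mem_flatten.1 (ht.mem_iff.1 hxt)
        obtain ⟨j, hj, rfl⟩ := mem_iff_getElem.1 hwj
        have := hwpos j (by omega) x (by rwa [getD_eq_getElem _ _ hj])
        omega
    · rw [length_append, hupB.length_eq, length_append]
      omega
    · intro k hk
      have h1 : k + 1 ≤ u.countP (fun x => decide (x ≤ u.getD k 0)) := by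
        apply sorted_countP_ge (hu.imp le_of_lt) hk
        rw [getD_eq_getElem _ _ hk]
      set a := u.getD k 0
      have h2 : u.countP (fun x => decide (x ≤ a)) ≤ (v ++ t).countP (fun x => decide (x ≤ a)) := by
        rw [hupB.countP_eq, countP_append, countP_append, countP_flatten, ht.countP_eq,
          countP_flatten]
        have := sum_map_le_sum_map (countP (fun x => decide (x ≤ a)))
          (countP (fun x => decide (x ≤ a))) B w (by omega) (fun j hj => hcnt j (by omega) a)
        omega
      omega
  · intro i hi hcon
    obtain ⟨hS1, hS2⟩ := interleave_sorted_facts hB (huI ▸ hu) hi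
    set a := v.getD i 0 with ha
    have hkey := isPFL_countP hcon a
    have hucount : u.countP (fun x => decide (x ≤ a)) =
        (B.map (countP (fun x => decide (x ≤ a)))).sum + v.countP (fun x => decide (x ≤ a)) := by
      rw [hupB.countP_eq, countP_append, countP_flatten]
    have hvi : v[i] = a := by rw [ha, getD_eq_getElem _ _ hi]
    have hvset : v.countP (fun x => decide (x ≤ a)) =
        (v.set i (a + 1)).countP (fun x => decide (x ≤ a)) + 1 := by
      rw [set_eq_take_append_cons_drop, if_pos hi]
      conv_lhs => rw [← take_append_drop i v, drop_eq_getElem_cons hi]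
      rw [countP_append, countP_append, countP_cons, countP_cons, hvi]
      simp only [decide_eq_true_eq]
      rw [if_pos le_rfl, if_neg (by omega)]
      omega
    have hblocks : (w.map (countP (fun x => decide (x ≤ a)))).sum ≤
        (B.map (countP (fun x => decide (x ≤ a)))).sum := by
      apply sum_map_le_sum_map _ _ w B (by omega)
      intro j hj
      have hjlen : j < v.length + 1 := by omega
      by_cases hji : j ≤ i
      · have hful : (B.getD j []).countP (fun x => decide (x ≤ a)) = (B.getD j []).length := by
          rw [countP_eq_length]
          intro x hx
          simp only [decide_eq_true_eq]
          exact le_of_lt (hS1 j hji x hx)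
        calc (w.getD j []).countP (fun x => decide (x ≤ a)) ≤ (w.getD j []).length :=
            countP_le_length
          _ = (B.getD j []).length := hlenb j hjlen
          _ = _ := hful.symm
      · push_neg at hji
        have h0 : (w.getD j []).countP (fun x => decide (x ≤ a)) = 0 := by
          rw [countP_eq_zero]
          intro x hx
          have h1 := hwpos j hjlen x hx
          have h2 : a ≤ c j := by
            have hcj : c j = v.getD (j-1) 0 := by
              rw [hc]
              simp only []
              rw [if_neg (by omega)]
            rw [hcj]
            exact hS2 (j-1) (by omega) (by omega)
          simp only [decide_eq_true_eq]
          omega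
        omega
    have hvt : ((v.set i (a+1)) ++ t).countP (fun x => decide (x ≤ a)) =
        (v.set i (a+1)).countP (fun x => decide (x ≤ a)) +
        (w.map (countP (fun x => decide (x ≤ a)))).sum := by
      rw [countP_append, ht.countP_eq, countP_flatten]
    omega
end

section
/- The Goncarov polynomial associated to the arithmetic sequence a, a+b, ..., a+(m−1)b is the Abel polynomial: g_m(x; a, a+b, ..., a+(m−1)b) = (x−a)(x−a−mb)^(m−1). -/
open Polynomial

/-- Two real polynomials with equal derivatives and equal value at one point are equal. -/
lemma poly_ext_aux {p q : Polynomial ℝ} (hd : derivative p = derivative q) (a : ℝ)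
    (he : p.eval a = q.eval a) : p = q := by
  have h : derivative (p - q) = 0 := by rw [derivative_sub, hd, sub_self]
  have hdeg : (p - q).natDegree = 0 := natDegree_eq_zero_of_derivative_eq_zero h
  have hC := Polynomial.eq_C_of_natDegree_eq_zero hdeg
  have h0 : (p - q).coeff 0 = 0 := by
    have := congrArg (Polynomial.eval a) hC
    simpa [he, sub_eq_zero] using this.symm
  have : p - q = 0 := by rw [hC, h0, map_zero]
  exact sub_eq_zero.mp this

/-- Splitting off the head of the coerced arithmetic range list. -/
lemma range_map_split (a b : ℝ) (n : ℕ) :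
    ((List.range (n+1)).map (fun i => a + i * b) : List ℝ)
        = a :: ((List.range n).map (fun i => (a + b) + i * b) : List ℝ) := by
  have h : (do let x ← List.range (n+1); pure ((x:ℝ))) = (List.range (n+1)).map Nat.cast :=
    List.map_eq_flatMap.symm
  have h' : (do let x ← List.range n; pure ((x:ℝ))) = (List.range n).map Nat.cast :=
    List.map_eq_flatMap.symm
  rw [h, h', List.range_succ_eq_map, List.map_cons, List.map_cons, List.map_map, List.map_map,
    List.map_map]
  congr 1
  · norm_num
  · apply List.map_congr_left
    intro i _
    simp only [Function.comp_apply]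
    push_cast
    ring

/-- Length of the coerced arithmetic range list. -/
lemma range_map_length (a b : ℝ) (n : ℕ) :
    ((List.range n).map (fun i => a + i * b) : List ℝ).length = n := by
  have h' : (do let x ← List.range n; pure ((x:ℝ))) = (List.range n).map Nat.cast :=
    List.map_eq_flatMap.symm
  rw [h']
  simp

/-- For any family `g` of Goncarov polynomials (indexed by the list of interpolation nodes,
defined by `g [] = 1`, `D g_m(x; a₀,...,a_{m-1}) = m ⬝ g_{m-1}(x; a₁,...,a_{m-1})` and
`g_m(a₀; a₀,...,a_{m-1}) = 0`), the Goncarov polynomial of an arithmetic sequence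
`a, a+b, ..., a+(m-1)b` is the Abel polynomial `(x-a)(x-a-mb)^(m-1)`. -/
theorem goncarov_arithmetic_is_abel (g : List ℝ → Polynomial ℝ)
    (h0 : g [] = 1)
    (hD : ∀ (a : ℝ) (as : List ℝ),
      derivative (g (a :: as)) = ((as.length + 1 : ℕ) : ℝ) • g as)
    (hE : ∀ (a : ℝ) (as : List ℝ), (g (a :: as)).eval a = 0)
    (a b : ℝ) (m : ℕ) (hm : 0 < m) :
    g ((List.range m).map (fun i => a + i * b)) =
      (X - C a) * (X - C (a + m * b)) ^ (m - 1) := by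
  induction m generalizing a with
  | zero => exact absurd hm (lt_irrefl 0)
  | succ n ih =>
    rw [range_map_split]
    cases n with
    | zero =>
      apply poly_ext_aux (a := a)
      · rw [hD a _]
        simp [h0]
      · rw [hE a _]
        simp
    | succ k =>
      have hih := ih (a + b) (Nat.succ_pos k)
      apply poly_ext_aux (a := a)
      · rw [hD, range_map_length, hih]
        rw [derivative_mul, derivative_pow, derivative_sub, derivative_X, derivative_C,
          derivative_sub, derivative_X, derivative_C]
        simp only [Nat.add_sub_cancel, sub_zero, mul_one]
        rw [smul_eq_C_mul]
        have h1 : a + b + (k + 1 : ℕ) * b = a + (k + 1 + 1 : ℕ) * b := by push_cast; ring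
        rw [h1]
        simp only [C_add, C_mul, C_eq_natCast, C_1]
        push_cast
        ring
      · rw [hE]
        simp
end

section
/- For uᵢ = a+(i−1)b and integer l with uₘ−m+1 ≥ l, the identity ∑_{(s₂,...,s_{l+1}) ⊨ n} binom(n; s₂,...,s_{l+1}) ∏ᵢ (sᵢ+1)^(sᵢ−1) = l·(n+l)^(n−1) holds, where the sum is over all (l)-tuples of nonnegative integers summing to n. Equivalently, (−1)^n g_n(0; l, l+1, ..., l+n−1) = l(n+l)^(n−1). -/
open Finset

def pabel : ℕ → ℝ → ℝ
  | 0, _ => 1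
  | k + 1, x => x * (x + (k + 1)) ^ k

@[simp] lemma pabel_zero (x : ℝ) : pabel 0 x = 1 := rfl

lemma pabel_succ (k : ℕ) (x : ℝ) : pabel (k + 1) x = x * (x + (k + 1)) ^ k := rfl

@[simp] lemma pabel_zero_left (n : ℕ) : pabel n 0 = if n = 0 then 1 else 0 := by
  cases n <;> simp [pabel]

lemma pabel_one (k : ℕ) : pabel k (1 : ℝ) = ((k + 1 : ℕ) : ℝ) ^ (k - 1) := by
  cases k with
  | zero => simp
  | succ j => simp [pabel_succ]; ring_nf

lemma pabel_hasDerivAt (k : ℕ) (x : ℝ) :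
    HasDerivAt (pabel (k + 1)) (((k : ℝ) + 1) * pabel k (x + 1)) x := by
  have h : HasDerivAt (fun x : ℝ => x * (x + (k + 1)) ^ k)
      (1 * (x + (k + 1)) ^ k + x * ((k : ℝ) * (x + (k + 1)) ^ (k - 1) * 1)) x := by
    exact (hasDerivAt_id x).mul
      (((hasDerivAt_pow k (x + (k + 1)))).comp x ((hasDerivAt_id x).add_const _))
  have he : (fun x : ℝ => x * (x + (k + 1)) ^ k) = pabel (k + 1) := by
    funext y; rw [pabel_succ]
  rw [he] at h
  convert h using 1
  cases k with
  | zero => simp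
  | succ j =>
    rw [pabel_succ]
    simp only [Nat.add_sub_cancel, pow_succ]
    push_cast
    ring

lemma abel_sum (n : ℕ) : ∀ (y x : ℝ),
    ∑ k ∈ Finset.range (n + 1), ((n.choose k : ℝ) * pabel k x * pabel (n - k) y)
      = pabel n (x + y) := by
  induction n with
  | zero => intro y x; simp
  | succ n IH =>
    intro y
    set f : ℝ → ℝ := fun x =>
      ∑ k ∈ Finset.range (n + 2), (((n + 1).choose k : ℝ) * pabel k x * pabel (n + 1 - k) y)
      with hf_def
    have hf : ∀ x, HasDerivAt f (((n : ℝ) + 1) * pabel n (x + 1 + y)) x := by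
      intro x
      have h1 : HasDerivAt f (∑ k ∈ Finset.range (n + 2),
          (((n + 1).choose k : ℝ) * ((k : ℝ) * pabel (k - 1) (x + 1)) * pabel (n + 1 - k) y)) x := by
        apply HasDerivAt.fun_sum
        intro k _
        cases k with
        | zero => simpa using hasDerivAt_const x (((n + 1).choose 0 : ℝ) * pabel 0 0 * pabel (n + 1) y)
        | succ j =>
          have := ((pabel_hasDerivAt j x).const_mul (((n + 1).choose (j + 1) : ℝ))).mul_const
            (pabel (n + 1 - (j + 1)) y)
          convert this using 1
          · rfl
          push_cast
          ring
      have hsum : (∑ k ∈ Finset.range (n + 2),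
          (((n + 1).choose k : ℝ) * ((k : ℝ) * pabel (k - 1) (x + 1)) * pabel (n + 1 - k) y))
          = ((n : ℝ) + 1) * pabel n (x + 1 + y) := by
        rw [Finset.sum_range_succ']
        simp only [Nat.cast_zero, zero_mul, mul_zero, add_zero, Nat.succ_sub_one,
          Nat.succ_sub_succ, Nat.sub_zero]
        rw [← IH y (x + 1), Finset.mul_sum]
        apply Finset.sum_congr rfl
        intro j _
        have hc : (n + 1) * n.choose j = (n + 1).choose (j + 1) * (j + 1) := by
          rw [← Nat.add_one_mul_choose_eq]
        have hc' : ((n : ℝ) + 1) * (n.choose j : ℝ) = ((n + 1).choose (j + 1) : ℝ) * ((j : ℝ) + 1) := by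
          exact_mod_cast congrArg (Nat.cast : ℕ → ℝ) hc
        push_cast
        linear_combination -(pabel j (x + 1) * pabel (n - j) y) * hc'
      rw [hsum] at h1
      exact h1
    have hg : ∀ x : ℝ, HasDerivAt (fun x : ℝ => pabel (n + 1) (x + y))
        (((n : ℝ) + 1) * pabel n (x + 1 + y)) x := by
      intro x
      have := (pabel_hasDerivAt n (x + y)).comp x ((hasDerivAt_id x).add_const y)
      have he : x + 1 + y = x + y + 1 := by ring
      rw [he]
      simpa [Function.comp_def] using this
    have hD : ∀ x : ℝ, HasDerivAt (fun x => f x - pabel (n + 1) (x + y)) 0 x := by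
      intro x
      have := (hf x).sub (hg x)
      simp only [sub_self] at this
      exact this
    have hconst : ∀ x : ℝ, f x - pabel (n + 1) (x + y) = f 0 - pabel (n + 1) (0 + y) :=
      fun x => is_const_of_deriv_eq_zero
        (fun z => (hD z).differentiableAt) (fun z => (hD z).deriv) x 0
    have hf0 : f 0 = pabel (n + 1) y := by
      simp only [hf_def]
      rw [Finset.sum_eq_single_of_mem 0 (by simp)]
      · simp
      · intro b _ hb
        cases b with
        | zero => exact absurd rfl hb
        | succ j => simp [pabel_succ]
    intro x
    have := hconst x
    rw [hf0, zero_add, sub_self] at this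
    have := sub_eq_zero.mp this
    simpa [hf_def] using this

lemma sum_antidiagonalTuple_succ {M : Type*} [AddCommMonoid M] (l n : ℕ)
    (F : (Fin (l + 1) → ℕ) → M) :
    ∑ s ∈ Finset.Nat.antidiagonalTuple (l + 1) n, F s
      = ∑ p ∈ Finset.HasAntidiagonal.antidiagonal n,
          ∑ t ∈ Finset.Nat.antidiagonalTuple l p.2, F (Fin.cons p.1 t) := by
  rw [Finset.sum_sigma']
  refine Finset.sum_nbij' (fun s => ⟨(s 0, ∑ j, Fin.tail s j), Fin.tail s⟩)
    (fun p => Fin.cons p.1.1 p.2) ?_ ?_ ?_ ?_ ?_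
  · intro s hs
    simp only [Finset.Nat.mem_antidiagonalTuple] at hs
    simp only [Finset.mem_sigma, Finset.HasAntidiagonal.mem_antidiagonal,
      Finset.Nat.mem_antidiagonalTuple]
    refine ⟨?_, trivial⟩
    rw [← hs, Fin.sum_univ_succ]
    rfl
  · rintro ⟨⟨a, b⟩, t⟩ hp
    simp only [Finset.mem_sigma, Finset.HasAntidiagonal.mem_antidiagonal,
      Finset.Nat.mem_antidiagonalTuple, Finset.HasAntidiagonal.mem_antidiagonal] at hp ⊢
    rw [Fin.sum_cons, hp.2, hp.1]
  · intro s _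
    simp [Fin.cons_self_tail]
  · rintro ⟨⟨a, b⟩, t⟩ hp
    simp only [Finset.mem_sigma, Finset.HasAntidiagonal.mem_antidiagonal,
      Finset.Nat.mem_antidiagonalTuple] at hp
    simp [Fin.tail_cons, hp.2]
  · intro s _
    simp [Fin.cons_self_tail]

lemma multinomial_univ_cons (l a : ℕ) (t : Fin l → ℕ) :
    Nat.multinomial Finset.univ (Fin.cons a t : Fin (l + 1) → ℕ)
      = (a + ∑ i, t i).choose a * Nat.multinomial Finset.univ t := by
  have h1 := Nat.multinomial_spec (Finset.univ : Finset (Fin (l + 1))) (Fin.cons a t)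
  have h2 := Nat.multinomial_spec (Finset.univ : Finset (Fin l)) t
  rw [Fin.sum_univ_succ, Fin.cons_zero] at h1
  have hprod : (∏ i : Fin (l + 1), Nat.factorial ((Fin.cons a t : Fin (l + 1) → ℕ) i))
      = Nat.factorial a * ∏ i : Fin l, Nat.factorial (t i) := by
    rw [Fin.prod_univ_succ]; simp
  rw [hprod] at h1
  have hpos : 0 < Nat.factorial a * ∏ i : Fin l, Nat.factorial (t i) :=
    Nat.mul_pos (Nat.factorial_pos a) (Finset.prod_pos fun i _ => Nat.factorial_pos _)
  apply Nat.eq_of_mul_eq_mul_left hpos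
  have hsimp : (∑ i : Fin l, (Fin.cons a t : Fin (l + 1) → ℕ) i.succ) = ∑ i, t i := by simp
  rw [hsimp] at h1
  calc Nat.factorial a * (∏ i : Fin l, Nat.factorial (t i))
        * Nat.multinomial Finset.univ (Fin.cons a t)
      = Nat.factorial (a + ∑ i, t i) := h1
    _ = (a + ∑ i, t i).choose a * Nat.factorial a * Nat.factorial (∑ i, t i) := by
        rw [Nat.choose_symm_add, Nat.add_choose_mul_factorial_mul_factorial]
    _ = (a + ∑ i, t i).choose a * Nat.factorial a *
          ((∏ i : Fin l, Nat.factorial (t i)) * Nat.multinomial Finset.univ t) := by rw [h2]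
    _ = Nat.factorial a * (∏ i : Fin l, Nat.factorial (t i)) *
          ((a + ∑ i, t i).choose a * Nat.multinomial Finset.univ t) := by ring

lemma abel_G : ∀ (l n : ℕ), ∑ s ∈ Finset.Nat.antidiagonalTuple l n,
    ((Nat.multinomial Finset.univ s : ℝ) * ∏ j, ((s j + 1 : ℕ) : ℝ) ^ (s j - 1))
      = pabel n l := by
  intro l
  induction l with
  | zero =>
    intro n
    cases n with
    | zero => simp
    | succ m => simp [pabel_succ]
  | succ l IH =>
    intro n
    rw [sum_antidiagonalTuple_succ]
    have hstep : ∀ p ∈ Finset.HasAntidiagonal.antidiagonal n,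
        (∑ t ∈ Finset.Nat.antidiagonalTuple l p.2,
          ((Nat.multinomial Finset.univ (Fin.cons p.1 t : Fin (l + 1) → ℕ) : ℝ) *
            ∏ j, (((Fin.cons p.1 t : Fin (l + 1) → ℕ) j + 1 : ℕ) : ℝ)
              ^ ((Fin.cons p.1 t : Fin (l + 1) → ℕ) j - 1)))
        = (n.choose p.1 : ℝ) * pabel p.1 1 * pabel p.2 l := by
      rintro ⟨a, b⟩ hp
      rw [Finset.HasAntidiagonal.mem_antidiagonal] at hp
      have hterm : ∀ t ∈ Finset.Nat.antidiagonalTuple l b,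
          ((Nat.multinomial Finset.univ (Fin.cons a t : Fin (l + 1) → ℕ) : ℝ) *
            ∏ j, (((Fin.cons a t : Fin (l + 1) → ℕ) j + 1 : ℕ) : ℝ)
              ^ ((Fin.cons a t : Fin (l + 1) → ℕ) j - 1))
          = ((n.choose a : ℝ) * pabel a 1) *
            ((Nat.multinomial Finset.univ t : ℝ) * ∏ j, ((t j + 1 : ℕ) : ℝ) ^ (t j - 1)) := by
        intro t ht
        rw [Finset.Nat.mem_antidiagonalTuple] at ht
        rw [multinomial_univ_cons, Fin.prod_univ_succ]
        simp only [Fin.cons_zero, Fin.cons_succ, ht, hp, pabel_one]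
        push_cast
        ring
      rw [Finset.sum_congr rfl hterm, ← Finset.mul_sum, IH b]
    rw [Finset.sum_congr rfl hstep, Finset.Nat.sum_antidiagonal_eq_sum_range_succ_mk,
      abel_sum n (l : ℝ) 1]
    push_cast
    rw [add_comm (1 : ℝ) (l : ℝ)]

/-- Abel's identity for parking functions with `u = (l, l+1, ..., l+n-1)`:
`∑_{(s₁,...,s_l) ⊨ n} binom(n; s) ∏ᵢ (sᵢ+1)^(sᵢ-1) = l (n+l)^(n-1)`
(the right side interpreted with real exponent `n - 1`). -/
theorem abel_composition_identity (l n : ℕ) (hl : 0 < l) :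
    ∑ s ∈ Finset.Nat.antidiagonalTuple l n,
        ((Nat.multinomial Finset.univ s : ℝ) * ∏ j, ((s j + 1 : ℕ) : ℝ) ^ (s j - 1)) =
      (l : ℝ) * ((n + l : ℕ) : ℝ) ^ ((n : ℤ) - 1) := by
  rw [abel_G l n]
  have hl' : (l : ℝ) ≠ 0 := Nat.cast_ne_zero.mpr hl.ne'
  cases n with
  | zero =>
    simp only [pabel_zero, Nat.cast_zero, Nat.zero_add, zero_add, Nat.cast_ofNat]
    rw [show (0 : ℤ) - 1 = -1 by decide, zpow_neg_one]
    field_simp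
  | succ m =>
    rw [show ((m + 1 : ℕ) : ℤ) - 1 = (m : ℤ) by push_cast; ring, zpow_natCast,
      pabel_succ]
    push_cast
    ring
end
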